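/- arXiv:2102.07299 — 5 statements merged into one kernel-verified Lean document; each statement's English description precedes it below -/
import Mathlib

section
/- For every n ≥ 1 and every 321-avoiding permutation π of {1,...,n}, and every tuple of values (a,b,c,d,e), the number of 321-avoiding permutations π of {1,...,n} with (rlm(π), rlmin(π), wnm(π), des(π), ides(π)) = (a,b,c,d,e) equals the number of 321-avoiding permutations σ of {1,...,n} with (rlm(σ), wnm(σ), rlmin(σ), des(σ), ides(σ)) = (a,b,c,d,e). That is, the statistics (rlm, rlmin, wnm, des, ides) and (rlm, wnm, rlmin, des, ides) are equidistributed over 321-avoiding permutations of length n. -/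
open Finset

namespace PermStats

variable {n : ℕ}

/-- Number of left-to-right maxima of the permutation `π` (viewed as the
sequence `π 0, π 1, …, π (n-1)`). -/
def lrmax (π : Equiv.Perm (Fin n)) : ℕ :=
  (univ.filter (fun i : Fin n => ∀ j, j < i → π j < π i)).card

/-- Number of left-to-right minima. -/
def lrmin (π : Equiv.Perm (Fin n)) : ℕ :=
  (univ.filter (fun i : Fin n => ∀ j, j < i → π i < π j)).card

/-- Number of right-to-left maxima. -/
def rlmax (π : Equiv.Perm (Fin n)) : ℕ :=
  (univ.filter (fun i : Fin n => ∀ j, i < j → π j < π i)).card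

/-- Number of right-to-left minima. -/
def rlmin (π : Equiv.Perm (Fin n)) : ℕ :=
  (univ.filter (fun i : Fin n => ∀ j, i < j → π i < π j)).card

/-- `wnm π` counts indices that are weak excedances (`π i ≥ i`) and
non-mid-points (there are no `j < i < k` with `π j > π i > π k`). -/
def wnm (π : Equiv.Perm (Fin n)) : ℕ :=
  (univ.filter (fun i : Fin n =>
    i ≤ π i ∧ ¬ ∃ j k : Fin n, j < i ∧ i < k ∧ π i < π j ∧ π k < π i)).card

/-- `rlm π` counts the right-to-left maxima of the subword of `π` strictly to
the left of the position `k` of the smallest value. -/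
def rlm (π : Equiv.Perm (Fin n)) : ℕ :=
  (univ.filter (fun i : Fin n =>
    ∃ k : Fin n, (π k : ℕ) = 0 ∧ i < k ∧ ∀ j, i < j → j < k → π j < π i)).card

/-- Number of descents. -/
def des (π : Equiv.Perm (Fin n)) : ℕ :=
  (univ.filter (fun i : Fin n => ∃ j : Fin n, (j : ℕ) = (i : ℕ) + 1 ∧ π j < π i)).card

/-- Number of ascents. -/
def asc (π : Equiv.Perm (Fin n)) : ℕ :=
  (univ.filter (fun i : Fin n => ∃ j : Fin n, (j : ℕ) = (i : ℕ) + 1 ∧ π i < π j)).card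

/-- Number of descents of the inverse. -/
def ides (π : Equiv.Perm (Fin n)) : ℕ := des π⁻¹

/-- Number of occurrences of the consecutive pattern `321`. -/
def c321 (π : Equiv.Perm (Fin n)) : ℕ :=
  (univ.filter (fun i : Fin n => ∃ j k : Fin n,
    (j : ℕ) = (i : ℕ) + 1 ∧ (k : ℕ) = (i : ℕ) + 2 ∧ π j < π i ∧ π k < π j)).card

/-- `π` avoids the (classical) pattern `321`. -/
def Avoids321 (π : Equiv.Perm (Fin n)) : Prop :=
  ¬ ∃ i j k : Fin n, i < j ∧ j < k ∧ π k < π j ∧ π j < π i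

end PermStats

namespace P321

open PermStats

variable {n : ℕ}

/-- number of weak excedances -/
def wexc (π : Equiv.Perm (Fin n)) : ℕ := (univ.filter (fun i : Fin n => i ≤ π i)).card

/-- number of weak deficiencies -/
def wdefc (π : Equiv.Perm (Fin n)) : ℕ := (univ.filter (fun i : Fin n => π i ≤ i)).card

lemma wnm_eq_wexc (π : Equiv.Perm (Fin n)) (hπ : Avoids321 π) : wnm π = wexc π := by
  unfold wnm wexc
  congr 1
  apply filter_congr
  intro i _
  constructor
  · exact fun h => h.1
  · intro h
    refine ⟨h, ?_⟩
    rintro ⟨j, k, hj, hk, h1, h2⟩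
    exact hπ ⟨j, i, k, hj, hk, h2, h1⟩

lemma rlmin_iff (π : Equiv.Perm (Fin n)) (hπ : Avoids321 π) (i : Fin n) :
    (∀ j, i < j → π i < π j) ↔ π i ≤ i := by
  constructor
  · intro hall
    by_contra hle
    have hgt : i < π i := lt_of_not_ge hle
    have hex : ∃ v ∈ Finset.Iic (π i), ¬ (π⁻¹ v ≤ i) := by
      by_contra hall2
      push_neg at hall2
      have hmap : ∀ v ∈ Finset.Iic (π i), π⁻¹ v ∈ Finset.Iic i := by
        intro v hv; exact Finset.mem_Iic.mpr (hall2 v hv)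
      have hcard := Finset.card_le_card_of_injOn (fun v => π⁻¹ v) hmap
        (fun x _ y _ h => (π⁻¹).injective h)
      rw [Fin.card_Iic, Fin.card_Iic] at hcard
      have := hgt
      rw [Fin.lt_def] at this
      omega
    obtain ⟨v, hv, hj⟩ := hex
    set j := π⁻¹ v with hjdef
    have hij : i < j := lt_of_not_ge hj
    have hπj : π j = v := by simp [hjdef]
    have hne : j ≠ i := Fin.ne_of_gt hij
    have : π i < π j := hall j hij
    rw [hπj] at this
    exact absurd (lt_of_lt_of_le this (Finset.mem_Iic.mp hv)) (lt_irrefl _)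
  · intro hle j hij
    by_contra hnot
    have hji : π j < π i := by
      rcases lt_or_eq_of_le (le_of_not_gt hnot) with h | h
      · exact h
      · exact absurd (π.injective h) (Fin.ne_of_gt hij)
    have hex : ∃ l ∈ Finset.Iic i, ¬ (π l ≤ π i) := by
      by_contra hall2
      push_neg at hall2
      have hmap : ∀ l ∈ Finset.Iic i, π l ∈ (Finset.Iic (π i)).erase (π j) := by
        intro l hl
        refine Finset.mem_erase.mpr ⟨?_, Finset.mem_Iic.mpr (hall2 l hl)⟩
        intro hcontra
        have : l = j := π.injective hcontra
        subst this
        exact absurd (lt_of_le_of_lt (Finset.mem_Iic.mp hl) hij) (lt_irrefl _)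
      have hcard := Finset.card_le_card_of_injOn (fun l => π l) hmap
        (fun x _ y _ h => π.injective h)
      rw [Fin.card_Iic] at hcard
      rw [Finset.card_erase_of_mem (Finset.mem_Iic.mpr (le_of_lt hji)), Fin.card_Iic] at hcard
      have := hle
      rw [Fin.le_def] at this
      omega
    obtain ⟨l, hl, hli⟩ := hex
    have hlt : π i < π l := lt_of_not_ge hli
    have hlne : l ≠ i := by
      intro h; subst h; exact hli (le_refl _)
    have hlli : l < i := lt_of_le_of_ne (Finset.mem_Iic.mp hl) hlne
    exact hπ ⟨l, i, j, hlli, hij, hji, hlt⟩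

lemma rlmin_eq_wdefc (π : Equiv.Perm (Fin n)) (hπ : Avoids321 π) : rlmin π = wdefc π := by
  unfold rlmin wdefc
  congr 1
  apply filter_congr
  intro i _
  simpa using rlmin_iff π hπ i

/-- reverse-complement -/
def rc (π : Equiv.Perm (Fin n)) : Equiv.Perm (Fin n) := Fin.revPerm * π * Fin.revPerm

@[simp] lemma rc_apply (π : Equiv.Perm (Fin n)) (x : Fin n) : rc π x = (π x.rev).rev := rfl

@[simp] lemma rc_rc (π : Equiv.Perm (Fin n)) : rc (rc π) = π := by
  ext x
  simp [rc]

lemma revPerm_inv : (Fin.revPerm : Equiv.Perm (Fin n))⁻¹ = Fin.revPerm := by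
  apply Equiv.ext
  intro x
  apply Fin.rev_injective
  show x.rev.rev = _
  rw [Fin.rev_rev]
  show x = Fin.revPerm (Fin.revPerm⁻¹ x)
  exact (Equiv.apply_symm_apply Fin.revPerm x).symm

lemma rc_inv (π : Equiv.Perm (Fin n)) : (rc π)⁻¹ = rc π⁻¹ := by
  unfold rc
  rw [mul_inv_rev, mul_inv_rev, revPerm_inv, mul_assoc]

lemma av_rc_of (π : Equiv.Perm (Fin n)) (hπ : Avoids321 π) : Avoids321 (rc π) := by
  rintro ⟨i, j, k, hij, hjk, h1, h2⟩
  simp only [rc_apply] at h1 h2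
  rw [Fin.rev_lt_rev] at h1 h2
  exact hπ ⟨k.rev, j.rev, i.rev, Fin.rev_lt_rev.mpr hjk, Fin.rev_lt_rev.mpr hij, h2, h1⟩

lemma av_rc (π : Equiv.Perm (Fin n)) : Avoids321 (rc π) ↔ Avoids321 π := by
  constructor
  · intro h; have := av_rc_of _ h; rwa [rc_rc] at this
  · exact av_rc_of π

lemma wexc_rc (π : Equiv.Perm (Fin n)) : wexc (rc π) = wdefc π := by
  unfold wexc wdefc
  refine Finset.card_bij' (fun i _ => i.rev) (fun i _ => i.rev) ?_ ?_ ?_ ?_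
  · intro a ha
    simp only [Finset.mem_filter, Finset.mem_univ, true_and] at ha ⊢
    simp only [rc_apply] at ha ⊢
    have h2 := Fin.rev_le_rev.mpr ha
    rwa [Fin.rev_rev] at h2
  · intro a ha
    simp only [Finset.mem_filter, Finset.mem_univ, true_and] at ha ⊢
    simp only [rc_apply] at ha ⊢
    rw [Fin.rev_rev]
    exact Fin.rev_le_rev.mpr ha
  · intro a _; exact Fin.rev_rev a
  · intro a _; exact Fin.rev_rev a

lemma wdefc_rc (π : Equiv.Perm (Fin n)) : wdefc (rc π) = wexc π := by
  have := wexc_rc (rc π)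
  rw [rc_rc] at this
  omega

lemma des_rc (π : Equiv.Perm (Fin n)) : des (rc π) = des π := by
  unfold des
  refine Finset.card_bij'
    (fun a ha => Fin.rev (⟨(a : ℕ) + 1, by
      obtain ⟨-, j, hj1, -⟩ := Finset.mem_filter.mp ha
      omega⟩ : Fin n))
    (fun a ha => Fin.rev (⟨(a : ℕ) + 1, by
      obtain ⟨-, j, hj1, -⟩ := Finset.mem_filter.mp ha
      omega⟩ : Fin n)) ?_ ?_ ?_ ?_
  · intro a ha
    obtain ⟨-, j, hj1, hlt⟩ := Finset.mem_filter.mp ha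
    have hbound : (a : ℕ) + 1 < n := by omega
    refine Finset.mem_filter.mpr ⟨Finset.mem_univ _, a.rev, ?_, ?_⟩
    · simp only [Fin.val_rev, Fin.val_mk]
      omega
    · have hja : j = (⟨(a : ℕ) + 1, hbound⟩ : Fin n) := Fin.ext (by simpa using hj1)
      simp only [rc_apply] at hlt
      rw [Fin.rev_lt_rev] at hlt
      rwa [hja] at hlt
  · intro a ha
    obtain ⟨-, j, hj1, hlt⟩ := Finset.mem_filter.mp ha
    have hbound : (a : ℕ) + 1 < n := by omega
    refine Finset.mem_filter.mpr ⟨Finset.mem_univ _, a.rev, ?_, ?_⟩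
    · simp only [Fin.val_rev, Fin.val_mk]
      omega
    · have hja : j = (⟨(a : ℕ) + 1, hbound⟩ : Fin n) := Fin.ext (by simpa using hj1)
      simp only [rc_apply, Fin.rev_rev]
      rw [Fin.rev_lt_rev]
      rwa [hja] at hlt
  · intro a ha
    obtain ⟨-, j, hj1, -⟩ := Finset.mem_filter.mp ha
    apply Fin.ext
    simp only [Fin.val_rev, Fin.val_mk]
    omega
  · intro a ha
    obtain ⟨-, j, hj1, -⟩ := Finset.mem_filter.mp ha
    apply Fin.ext
    simp only [Fin.val_rev, Fin.val_mk]
    omega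

lemma ides_rc (π : Equiv.Perm (Fin n)) : ides (rc π) = ides π := by
  unfold ides
  rw [rc_inv, des_rc]

variable {m : ℕ}

lemma rc_zero_iff (π : Equiv.Perm (Fin (m+1))) :
    rc π 0 = 0 ↔ π (Fin.last m) = Fin.last m := by
  rw [rc_apply, Fin.rev_zero]
  constructor
  · intro h
    have := congrArg Fin.rev h
    rwa [Fin.rev_rev, Fin.rev_zero] at this
  · intro h
    rw [h, Fin.rev_last]

lemma rlm_eq (π : Equiv.Perm (Fin (m+1))) (hπ : Avoids321 π) :
    rlm π = if π 0 = 0 then 0 else 1 := by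
  unfold rlm
  by_cases h : π 0 = 0
  · rw [if_pos h]
    rw [Finset.card_eq_zero]
    rw [Finset.filter_eq_empty_iff]
    rintro i - ⟨k, hk0, hik, -⟩
    have hk : π k = 0 := Fin.ext (by simpa using hk0)
    have : k = 0 := π.injective (by rw [hk, h])
    subst this
    exact absurd hik (Fin.not_lt_zero i)
  · rw [if_neg h]
    set k := π.symm 0 with hkdef
    have hπk : π k = 0 := π.apply_symm_apply 0
    have hkne : k ≠ 0 := by
      intro hc; apply h; have h2 := hπk; rw [hc] at h2; exact h2
    have hkpos : 0 < (k : ℕ) := by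
      rcases Nat.eq_zero_or_pos (k : ℕ) with hz | hp
      · exact absurd (Fin.ext hz : k = 0) hkne
      · exact hp
    have hklt : (k : ℕ) - 1 < m + 1 := by omega
    set i0 : Fin (m+1) := ⟨(k : ℕ) - 1, hklt⟩ with hi0
    have : (univ.filter (fun i : Fin (m+1) =>
        ∃ k : Fin (m+1), (π k : ℕ) = 0 ∧ i < k ∧ ∀ j, i < j → j < k → π j < π i)) = {i0} := by
      apply Finset.ext
      intro i
      simp only [Finset.mem_filter, Finset.mem_univ, true_and, Finset.mem_singleton]
      constructor
      · rintro ⟨k2, hk0', hik', hall⟩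
        have hkk : k2 = k := π.injective (by
          rw [hπk]; exact Fin.ext (by simpa using hk0'))
        subst hkk
        apply Fin.ext
        show (i : ℕ) = (k : ℕ) - 1
        by_contra hc
        have hlt : (i : ℕ) + 1 < (k : ℕ) := by
          have := hik'; rw [Fin.lt_def] at this; omega
        set j : Fin (m+1) := ⟨(i : ℕ) + 1, by omega⟩ with hj
        have h1 : i < j := by rw [Fin.lt_def]; simp [hj]
        have h2 : j < k := by rw [Fin.lt_def]; simpa [hj] using hlt
        have hdes : π j < π i := hall j h1 h2
        have hjne : π j ≠ 0 := by
          intro hc2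
          have : j = k := π.injective (by rw [hc2, hπk])
          rw [this] at h2; exact absurd h2 (lt_irrefl _)
        have hj0 : π k < π j := by
          rw [hπk]
          rcases Nat.eq_zero_or_pos ((π j : ℕ)) with hz | hp
          · exact absurd (Fin.ext hz : π j = 0) hjne
          · rw [Fin.lt_def]; simpa using hp
        exact hπ ⟨i, j, k, h1, h2, hj0, hdes⟩
      · rintro rfl
        refine ⟨k, by simp [hπk], ?_, ?_⟩
        · rw [Fin.lt_def]; show (k:ℕ) - 1 < (k:ℕ); omega
        · intro j h1 h2
          rw [Fin.lt_def] at h1 h2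
          simp only [hi0] at h1
          omega
    rw [this, Finset.card_singleton]

/-- the rotation x ↦ x + 1 -/
def rot : Equiv.Perm (Fin (m+1)) := Equiv.addRight 1

@[simp] lemma rot_apply (x : Fin (m+1)) : rot x = x + 1 := rfl
@[simp] lemma rot_inv_apply (x : Fin (m+1)) : rot⁻¹ x = x - 1 := by
  have : rot⁻¹ x = rot.symm x := rfl
  rw [this]
  show (Equiv.addRight (1:Fin (m+1))).symm x = x - 1
  simp [sub_eq_add_neg]

/-- conjugation by the rotation -/
def Dm (π : Equiv.Perm (Fin (m+1))) : Equiv.Perm (Fin (m+1)) := rot⁻¹ * π * rot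

lemma Dm_apply (π : Equiv.Perm (Fin (m+1))) (x : Fin (m+1)) :
    Dm π x = π (x + 1) - 1 := by
  show rot⁻¹ (π (rot x)) = _
  rw [rot_apply, rot_inv_apply]

lemma Dm_add_one (π : Equiv.Perm (Fin (m+1))) (x : Fin (m+1)) :
    Dm π x + 1 = π (x + 1) := by
  rw [Dm_apply, sub_add_cancel]

/-- Em is the inverse of Dm -/
def Em (σ : Equiv.Perm (Fin (m+1))) : Equiv.Perm (Fin (m+1)) := rot * σ * rot⁻¹

lemma Em_Dm (π : Equiv.Perm (Fin (m+1))) : Em (Dm π) = π := by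
  unfold Em Dm
  group

lemma Dm_Em (π : Equiv.Perm (Fin (m+1))) : Dm (Em π) = π := by
  unfold Em Dm
  group

lemma val_add_one_of_ne_last {x : Fin (m+1)} (h : x ≠ Fin.last m) :
    ((x + 1 : Fin (m+1)) : ℕ) = (x : ℕ) + 1 := by
  apply Fin.val_add_one_of_lt
  exact lt_of_le_of_ne (Fin.le_last x) h

lemma add_one_eq_zero_iff {x : Fin (m+1)} : x + 1 = 0 ↔ x = Fin.last m := by
  constructor
  · intro h
    exact add_right_cancel (h.trans (Fin.last_add_one m).symm)
  · intro h; subst h; exact Fin.last_add_one m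

lemma lt_add_one_iff {v w : Fin (m+1)} (hv : v ≠ Fin.last m) (hw : w ≠ Fin.last m) :
    v + 1 < w + 1 ↔ v < w := by
  rw [Fin.lt_def, Fin.lt_def, val_add_one_of_ne_last hv, val_add_one_of_ne_last hw]
  omega

lemma le_add_one_iff {v w : Fin (m+1)} (hv : v ≠ Fin.last m) (hw : w ≠ Fin.last m) :
    v + 1 ≤ w + 1 ↔ v ≤ w := by
  rw [Fin.le_def, Fin.le_def, val_add_one_of_ne_last hv, val_add_one_of_ne_last hw]
  omega

lemma sub_one_eq_last_iff {x : Fin (m+1)} : x - 1 = Fin.last m ↔ x = 0 := by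
  constructor
  · intro h
    have := congrArg (· + 1) h
    simp only [sub_add_cancel, Fin.last_add_one] at this
    exact this
  · intro h
    subst h
    rw [← Fin.last_add_one m, add_sub_cancel_right]

lemma val_sub_one_of_ne_zero {x : Fin (m+1)} (hx : x ≠ 0) :
    ((x - 1 : Fin (m+1)) : ℕ) = (x : ℕ) - 1 := by
  rw [Fin.coe_sub_one, if_neg hx]

section withH0
variable (π : Equiv.Perm (Fin (m+1))) (h0 : π 0 = 0)

include h0

lemma pi_ne_zero {z : Fin (m+1)} (hz : z ≠ 0) : π z ≠ 0 := by
  intro hc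
  exact hz (π.injective (by rw [hc, h0]))

lemma Dm_eq_last_iff (x : Fin (m+1)) : Dm π x = Fin.last m ↔ x = Fin.last m := by
  rw [← add_one_eq_zero_iff, Dm_add_one, ← add_one_eq_zero_iff (x := x)]
  constructor
  · intro h
    by_contra hne
    exact pi_ne_zero π h0 hne h
  · intro h; rw [h, h0]

lemma Dm_last : Dm π (Fin.last m) = Fin.last m := (Dm_eq_last_iff π h0 _).mpr rfl

lemma av_Dm (hπ : Avoids321 π) : Avoids321 (Dm π) := by
  rintro ⟨i, j, k, hij, hjk, h1, h2⟩
  have hkl : k ≠ Fin.last m := by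
    intro h
    subst h
    rw [Dm_last π h0] at h1
    exact absurd (lt_of_le_of_lt (Fin.le_last _) h1) (lt_irrefl _)
  have hjl : j ≠ Fin.last m := Fin.ne_last_of_lt hjk
  have hil : i ≠ Fin.last m := Fin.ne_last_of_lt hij
  have hDk : Dm π k ≠ Fin.last m := fun h => hkl ((Dm_eq_last_iff π h0 _).mp h)
  have hDj : Dm π j ≠ Fin.last m := fun h => hjl ((Dm_eq_last_iff π h0 _).mp h)
  have hDi : Dm π i ≠ Fin.last m := fun h => hil ((Dm_eq_last_iff π h0 _).mp h)
  have h1' : π (k+1) < π (j+1) := by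
    rw [← Dm_add_one, ← Dm_add_one]
    exact (lt_add_one_iff hDk hDj).mpr h1
  have h2' : π (j+1) < π (i+1) := by
    rw [← Dm_add_one, ← Dm_add_one]
    exact (lt_add_one_iff hDj hDi).mpr h2
  exact hπ ⟨i+1, j+1, k+1, (lt_add_one_iff hil hjl).mpr hij,
    (lt_add_one_iff hjl hkl).mpr hjk, h1', h2'⟩

lemma wexc_Dm : wexc (Dm π) = wexc π := by
  unfold wexc
  refine Finset.card_bij' (fun a _ => a + 1) (fun a _ => a - 1) ?_ ?_ ?_ ?_
  · intro a ha
    simp only [Finset.mem_filter, Finset.mem_univ, true_and] at ha ⊢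
    by_cases hl : a = Fin.last m
    · subst hl
      rw [Fin.last_add_one, h0]
    · have hDa : Dm π a ≠ Fin.last m := fun h => hl ((Dm_eq_last_iff π h0 _).mp h)
      rw [← Dm_add_one]
      exact (le_add_one_iff hl hDa).mpr ha
  · intro a ha
    simp only [Finset.mem_filter, Finset.mem_univ, true_and] at ha ⊢
    by_cases hz : a = 0
    · subst hz
      show (0:Fin (m+1)) - 1 ≤ Dm π (0 - 1)
      have : (0:Fin (m+1)) - 1 = Fin.last m := by
        rw [← Fin.last_add_one m, add_sub_cancel_right]
      rw [this, Dm_last π h0]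
    · have hne : a - 1 ≠ Fin.last m := by
        intro h
        exact hz (sub_one_eq_last_iff.mp h)
      have hDa : Dm π (a-1) ≠ Fin.last m := fun h => hne ((Dm_eq_last_iff π h0 _).mp h)
      rw [← le_add_one_iff hne hDa, Dm_add_one, sub_add_cancel]
      exact ha
  · intro a _; exact add_sub_cancel_right a 1
  · intro a _; exact sub_add_cancel a 1

lemma wdefc_Dm : wdefc (Dm π) = wdefc π := by
  unfold wdefc
  refine Finset.card_bij' (fun a _ => a + 1) (fun a _ => a - 1) ?_ ?_ ?_ ?_
  · intro a ha
    simp only [Finset.mem_filter, Finset.mem_univ, true_and] at ha ⊢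
    by_cases hl : a = Fin.last m
    · subst hl
      rw [Fin.last_add_one, h0]
    · have hDa : Dm π a ≠ Fin.last m := fun h => hl ((Dm_eq_last_iff π h0 _).mp h)
      rw [← Dm_add_one]
      exact (le_add_one_iff hDa hl).mpr ha
  · intro a ha
    simp only [Finset.mem_filter, Finset.mem_univ, true_and] at ha ⊢
    by_cases hz : a = 0
    · subst hz
      show Dm π (0 - 1) ≤ (0:Fin (m+1)) - 1
      have : (0:Fin (m+1)) - 1 = Fin.last m := by
        rw [← Fin.last_add_one m, add_sub_cancel_right]
      rw [this, Dm_last π h0]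
    · have hne : a - 1 ≠ Fin.last m := by
        intro h
        exact hz (sub_one_eq_last_iff.mp h)
      have hDa : Dm π (a-1) ≠ Fin.last m := fun h => hne ((Dm_eq_last_iff π h0 _).mp h)
      rw [← le_add_one_iff hDa hne, Dm_add_one, sub_add_cancel]
      exact ha
  · intro a _; exact add_sub_cancel_right a 1
  · intro a _; exact sub_add_cancel a 1

lemma des_Dm : des (Dm π) = des π := by
  unfold des
  refine Finset.card_bij' (fun a _ => a + 1) (fun a _ => a - 1) ?_ ?_ ?_ ?_
  · intro a ha
    obtain ⟨-, j, hj1, hlt⟩ := Finset.mem_filter.mp ha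
    have hal : a ≠ Fin.last m := by
      intro h; subst h
      have := j.isLt
      simp [Fin.val_last] at hj1
      omega
    have hjl : j ≠ Fin.last m := by
      intro h; subst h
      rw [Dm_last π h0] at hlt
      exact absurd (lt_of_le_of_lt (Fin.le_last _) hlt) (lt_irrefl _)
    have hja : j = a + 1 := Fin.ext (by rw [hj1, val_add_one_of_ne_last hal])
    have hDa : Dm π a ≠ Fin.last m := fun h => hal ((Dm_eq_last_iff π h0 _).mp h)
    have hDj : Dm π j ≠ Fin.last m := fun h => hjl ((Dm_eq_last_iff π h0 _).mp h)
    refine Finset.mem_filter.mpr ⟨Finset.mem_univ _, j + 1, ?_, ?_⟩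
    · rw [val_add_one_of_ne_last hjl, val_add_one_of_ne_last hal, hj1]
    · have h2 : Dm π j + 1 < Dm π a + 1 := (lt_add_one_iff hDj hDa).mpr hlt
      rw [Dm_add_one, Dm_add_one] at h2
      show π (j + 1) < π (a + 1)
      rw [hja] at h2 ⊢
      exact h2
  · intro a ha
    obtain ⟨-, j, hj1, hlt⟩ := Finset.mem_filter.mp ha
    have hal : a ≠ Fin.last m := by
      intro h; subst h
      have := j.isLt
      simp [Fin.val_last] at hj1
      omega
    have hja : j = a + 1 := Fin.ext (by rw [hj1, val_add_one_of_ne_last hal])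
    have ha0 : a ≠ 0 := by
      intro h; subst h
      rw [h0] at hlt
      exact absurd hlt (Fin.not_lt_zero _)
    have hsl : a - 1 ≠ Fin.last m := fun h => ha0 (sub_one_eq_last_iff.mp h)
    have hDs : Dm π (a - 1) ≠ Fin.last m := fun h => hsl ((Dm_eq_last_iff π h0 _).mp h)
    have hDa : Dm π a ≠ Fin.last m := fun h => hal ((Dm_eq_last_iff π h0 _).mp h)
    refine Finset.mem_filter.mpr ⟨Finset.mem_univ _, a, ?_, ?_⟩
    · rw [val_sub_one_of_ne_zero ha0]
      have : 0 < (a : ℕ) := by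
        rcases Nat.eq_zero_or_pos (a : ℕ) with hz | hp
        · exact absurd (Fin.ext hz : a = 0) ha0
        · exact hp
      omega
    · rw [← lt_add_one_iff hDa hDs, Dm_add_one, Dm_add_one, sub_add_cancel, ← hja]
      exact hlt
  · intro a _; exact add_sub_cancel_right a 1
  · intro a _; exact sub_add_cancel a 1

omit h0 in
lemma Dm_inv : (Dm π)⁻¹ = Dm π⁻¹ := by
  unfold Dm
  group

lemma ides_Dm : ides (Dm π) = ides π := by
  unfold ides
  rw [Dm_inv]
  apply des_Dm π⁻¹
  show π.symm 0 = 0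
  conv_lhs => rw [← h0]
  rw [π.symm_apply_apply]

end withH0

lemma rev_rot (x : Fin (m+1)) : Fin.rev (rot (Fin.rev x)) = rot⁻¹ x := by
  rw [rot_apply, rot_inv_apply]
  by_cases hz : x = 0
  · subst hz
    rw [Fin.rev_zero, Fin.last_add_one, Fin.rev_zero]
    rw [← Fin.last_add_one m, add_sub_cancel_right]
  · have hrl : x.rev ≠ Fin.last m := by
      intro h
      apply hz
      have := congrArg Fin.rev h
      rwa [Fin.rev_rev, Fin.rev_last] at this
    apply Fin.ext
    rw [Fin.val_rev, val_add_one_of_ne_last hrl, Fin.val_rev, val_sub_one_of_ne_zero hz]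
    have hx : 0 < (x:ℕ) := by
      rcases Nat.eq_zero_or_pos (x:ℕ) with h | h
      · exact absurd (Fin.ext h : x = 0) hz
      · exact h
    have := x.isLt
    omega

lemma rc_rot : Fin.revPerm * rot * Fin.revPerm = (rot⁻¹ : Equiv.Perm (Fin (m+1))) := by
  apply Equiv.ext
  intro x
  exact rev_rot x

lemma Em_eq_rc_Dm_rc (σ : Equiv.Perm (Fin (m+1))) : Em σ = rc (Dm (rc σ)) := by
  unfold Em Dm rc
  have h1 : Fin.revPerm * rot⁻¹ * Fin.revPerm = (rot : Equiv.Perm (Fin (m+1))) := by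
    have h := congrArg (fun z : Equiv.Perm (Fin (m+1)) => z⁻¹) (rc_rot (m := m))
    simp only [mul_inv_rev, revPerm_inv, inv_inv, mul_assoc] at h
    simp only [mul_assoc]
    exact h
  calc rot * σ * rot⁻¹
      = (Fin.revPerm * rot⁻¹ * Fin.revPerm) * σ * (Fin.revPerm * rot * Fin.revPerm) := by
        rw [h1, rc_rot]
    _ = Fin.revPerm * (rot⁻¹ * (Fin.revPerm * σ * Fin.revPerm) * rot) * Fin.revPerm := by
        simp only [mul_assoc]

section withHL
variable (σ : Equiv.Perm (Fin (m+1))) (hL : σ (Fin.last m) = Fin.last m)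
include hL

lemma rc_sigma_zero : rc σ 0 = 0 := (rc_zero_iff σ).mpr hL

lemma av_Em (hσ : Avoids321 σ) : Avoids321 (Em σ) := by
  rw [Em_eq_rc_Dm_rc]
  exact av_rc_of _ (av_Dm _ (rc_sigma_zero σ hL) (av_rc_of _ hσ))

lemma des_Em : des (Em σ) = des σ := by
  rw [Em_eq_rc_Dm_rc, des_rc, des_Dm _ (rc_sigma_zero σ hL), des_rc]

lemma ides_Em : ides (Em σ) = ides σ := by
  rw [Em_eq_rc_Dm_rc, ides_rc, ides_Dm _ (rc_sigma_zero σ hL), ides_rc]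

lemma wexc_Em : wexc (Em σ) = wexc σ := by
  rw [Em_eq_rc_Dm_rc, wexc_rc, wdefc_Dm _ (rc_sigma_zero σ hL), wdefc_rc]

lemma wdefc_Em : wdefc (Em σ) = wdefc σ := by
  rw [Em_eq_rc_Dm_rc, wdefc_rc, wexc_Dm _ (rc_sigma_zero σ hL), wexc_rc]

lemma Em_zero : Em σ 0 = 0 := by
  rw [Em_eq_rc_Dm_rc]
  rw [rc_zero_iff]
  exact Dm_last _ (rc_sigma_zero σ hL)

end withHL

end P321


open PermStats in
open scoped Classical in
/-- The statistics `(rlm, rlmin, wnm, des, ides)` and `(rlm, wnm, rlmin, des, ides)`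
are equidistributed over `321`-avoiding permutations of length `n`. -/
theorem stmt0 (n : ℕ) (hn : 1 ≤ n) (a b c d e : ℕ) :
    ((Finset.univ : Finset (Equiv.Perm (Fin n))).filter (fun π =>
        Avoids321 π ∧ rlm π = a ∧ rlmin π = b ∧ wnm π = c ∧ des π = d ∧ ides π = e)).card =
    ((Finset.univ : Finset (Equiv.Perm (Fin n))).filter (fun σ =>
        Avoids321 σ ∧ rlm σ = a ∧ wnm σ = b ∧ rlmin σ = c ∧ des σ = d ∧ ides σ = e)).card := by
  obtain ⟨m, rfl⟩ : ∃ m, n = m + 1 := ⟨n - 1, by omega⟩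
  clear hn
  open P321 in
  -- Normal forms
  have hLHS : ((Finset.univ : Finset (Equiv.Perm (Fin (m+1)))).filter (fun π =>
        Avoids321 π ∧ rlm π = a ∧ rlmin π = b ∧ wnm π = c ∧ des π = d ∧ ides π = e)) =
      (Finset.univ.filter (fun π : Equiv.Perm (Fin (m+1)) =>
        Avoids321 π ∧ (if π 0 = 0 then 0 else 1) = a ∧ wdefc π = b ∧ wexc π = c ∧
        des π = d ∧ ides π = e)) := by
    apply filter_congr
    intro π _
    constructor
    · rintro ⟨hav, h1, h2, h3, h4, h5⟩
      exact ⟨hav, by rw [← rlm_eq π hav]; exact h1,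
        by rw [← rlmin_eq_wdefc π hav]; exact h2,
        by rw [← wnm_eq_wexc π hav]; exact h3, h4, h5⟩
    · rintro ⟨hav, h1, h2, h3, h4, h5⟩
      exact ⟨hav, by rw [rlm_eq π hav]; exact h1,
        by rw [rlmin_eq_wdefc π hav]; exact h2,
        by rw [wnm_eq_wexc π hav]; exact h3, h4, h5⟩
  have hRHS : ((Finset.univ : Finset (Equiv.Perm (Fin (m+1)))).filter (fun σ =>
        Avoids321 σ ∧ rlm σ = a ∧ wnm σ = b ∧ rlmin σ = c ∧ des σ = d ∧ ides σ = e)) =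
      (Finset.univ.filter (fun σ : Equiv.Perm (Fin (m+1)) =>
        Avoids321 σ ∧ (if σ 0 = 0 then 0 else 1) = a ∧ wexc σ = b ∧ wdefc σ = c ∧
        des σ = d ∧ ides σ = e)) := by
    apply filter_congr
    intro σ _
    constructor
    · rintro ⟨hav, h1, h2, h3, h4, h5⟩
      exact ⟨hav, by rw [← rlm_eq σ hav]; exact h1,
        by rw [← wnm_eq_wexc σ hav]; exact h2,
        by rw [← rlmin_eq_wdefc σ hav]; exact h3, h4, h5⟩
    · rintro ⟨hav, h1, h2, h3, h4, h5⟩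
      exact ⟨hav, by rw [rlm_eq σ hav]; exact h1,
        by rw [wnm_eq_wexc σ hav]; exact h2,
        by rw [rlmin_eq_wdefc σ hav]; exact h3, h4, h5⟩
  rw [hLHS, hRHS]
  -- transport the RHS through rc
  have hrc : (Finset.univ.filter (fun σ : Equiv.Perm (Fin (m+1)) =>
        Avoids321 σ ∧ (if σ 0 = 0 then 0 else 1) = a ∧ wexc σ = b ∧ wdefc σ = c ∧
        des σ = d ∧ ides σ = e)).card =
      (Finset.univ.filter (fun π : Equiv.Perm (Fin (m+1)) =>
        Avoids321 π ∧ (if π (Fin.last m) = Fin.last m then 0 else 1) = a ∧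
        wdefc π = b ∧ wexc π = c ∧ des π = d ∧ ides π = e)).card := by
    refine Finset.card_bij' (fun σ _ => rc σ) (fun π _ => rc π) ?_ ?_ ?_ ?_
    · intro σ hσ
      obtain ⟨-, hav, h1, h2, h3, h4, h5⟩ := Finset.mem_filter.mp hσ
      refine Finset.mem_filter.mpr ⟨Finset.mem_univ _, av_rc_of _ hav, ?_,
        by rw [wdefc_rc]; exact h2, by rw [wexc_rc]; exact h3,
        by rw [des_rc]; exact h4, by rw [ides_rc]; exact h5⟩
      · have : rc σ (Fin.last m) = Fin.last m ↔ σ 0 = 0 := by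
          rw [← rc_zero_iff (rc σ), rc_rc]
        by_cases hz : σ 0 = 0
        · rw [if_pos (this.mpr hz)]
          rwa [if_pos hz] at h1
        · rw [if_neg (fun hc => hz (this.mp hc))]
          rwa [if_neg hz] at h1
    · intro π hπ
      obtain ⟨-, hav, h1, h2, h3, h4, h5⟩ := Finset.mem_filter.mp hπ
      refine Finset.mem_filter.mpr ⟨Finset.mem_univ _, av_rc_of _ hav, ?_,
        by rw [wexc_rc]; exact h2, by rw [wdefc_rc]; exact h3,
        by rw [des_rc]; exact h4, by rw [ides_rc]; exact h5⟩
      · have : rc π 0 = 0 ↔ π (Fin.last m) = Fin.last m := rc_zero_iff π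
        by_cases hz : π (Fin.last m) = Fin.last m
        · rw [if_pos (this.mpr hz)]
          rwa [if_pos hz] at h1
        · rw [if_neg (fun hc => hz (this.mp hc))]
          rwa [if_neg hz] at h1
    · intro σ _; exact rc_rc σ
    · intro π _; exact rc_rc π
  rw [hrc]
  -- the key exchange of the boundary indicator
  have key : ∀ b' c' d' e' : ℕ,
      (Finset.univ.filter (fun π : Equiv.Perm (Fin (m+1)) =>
        Avoids321 π ∧ π 0 = 0 ∧ wdefc π = b' ∧ wexc π = c' ∧ des π = d' ∧ ides π = e')).card =
      (Finset.univ.filter (fun π : Equiv.Perm (Fin (m+1)) =>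
        Avoids321 π ∧ π (Fin.last m) = Fin.last m ∧ wdefc π = b' ∧ wexc π = c' ∧
        des π = d' ∧ ides π = e')).card := by
    intro b' c' d' e'
    refine Finset.card_bij' (fun π _ => Dm π) (fun σ _ => Em σ) ?_ ?_ ?_ ?_
    · intro π hπ
      obtain ⟨-, hav, h0, h2, h3, h4, h5⟩ := Finset.mem_filter.mp hπ
      exact Finset.mem_filter.mpr ⟨Finset.mem_univ _, av_Dm π h0 hav, Dm_last π h0,
        by rw [wdefc_Dm π h0]; exact h2, by rw [wexc_Dm π h0]; exact h3,
        by rw [des_Dm π h0]; exact h4, by rw [ides_Dm π h0]; exact h5⟩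
    · intro σ hσ
      obtain ⟨-, hav, hLa, h2, h3, h4, h5⟩ := Finset.mem_filter.mp hσ
      exact Finset.mem_filter.mpr ⟨Finset.mem_univ _, av_Em σ hLa hav, Em_zero σ hLa,
        by rw [wdefc_Em σ hLa]; exact h2, by rw [wexc_Em σ hLa]; exact h3,
        by rw [des_Em σ hLa]; exact h4, by rw [ides_Em σ hLa]; exact h5⟩
    · intro π _; exact Em_Dm π
    · intro σ _; exact Dm_Em σ
  -- now case on a
  rcases Nat.lt_or_ge a 2 with ha2 | ha2
  · rcases Nat.lt_or_ge a 1 with ha1 | ha1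
    · -- a = 0
      have ha : a = 0 := by omega
      subst ha
      have e1 : (Finset.univ.filter (fun π : Equiv.Perm (Fin (m+1)) =>
          Avoids321 π ∧ (if π 0 = 0 then 0 else 1) = 0 ∧ wdefc π = b ∧ wexc π = c ∧
          des π = d ∧ ides π = e)) =
        (Finset.univ.filter (fun π : Equiv.Perm (Fin (m+1)) =>
          Avoids321 π ∧ π 0 = 0 ∧ wdefc π = b ∧ wexc π = c ∧ des π = d ∧ ides π = e)) := by
        apply filter_congr
        intro π _
        have : ((if π 0 = 0 then 0 else 1) = 0) ↔ π 0 = 0 := by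
          by_cases hz : π 0 = 0
          · simp [hz]
          · simp [hz]
        rw [this]
      have e2 : (Finset.univ.filter (fun π : Equiv.Perm (Fin (m+1)) =>
          Avoids321 π ∧ (if π (Fin.last m) = Fin.last m then 0 else 1) = 0 ∧ wdefc π = b ∧
          wexc π = c ∧ des π = d ∧ ides π = e)) =
        (Finset.univ.filter (fun π : Equiv.Perm (Fin (m+1)) =>
          Avoids321 π ∧ π (Fin.last m) = Fin.last m ∧ wdefc π = b ∧ wexc π = c ∧
          des π = d ∧ ides π = e)) := by
        apply filter_congr
        intro π _
        have : ((if π (Fin.last m) = Fin.last m then 0 else 1) = 0) ↔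
            π (Fin.last m) = Fin.last m := by
          by_cases hz : π (Fin.last m) = Fin.last m
          · simp [hz]
          · simp [hz]
        rw [this]
      rw [e1, e2]
      exact key b c d e
    · -- a = 1
      have ha : a = 1 := by omega
      subst ha
      -- write both sides as total minus the 0-case
      have split0 : ∀ (p : Equiv.Perm (Fin (m+1)) → Prop) (_ : DecidablePred p),
          (Finset.univ.filter (fun π : Equiv.Perm (Fin (m+1)) =>
            Avoids321 π ∧ (if p π then 0 else 1) = 1 ∧ wdefc π = b ∧ wexc π = c ∧
            des π = d ∧ ides π = e)).card +
          (Finset.univ.filter (fun π : Equiv.Perm (Fin (m+1)) =>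
            Avoids321 π ∧ p π ∧ wdefc π = b ∧ wexc π = c ∧
            des π = d ∧ ides π = e)).card =
          (Finset.univ.filter (fun π : Equiv.Perm (Fin (m+1)) =>
            Avoids321 π ∧ wdefc π = b ∧ wexc π = c ∧
            des π = d ∧ ides π = e)).card := by
        intro p _
        have h1 : (Finset.univ.filter (fun π : Equiv.Perm (Fin (m+1)) =>
            Avoids321 π ∧ (if p π then 0 else 1) = 1 ∧ wdefc π = b ∧ wexc π = c ∧
            des π = d ∧ ides π = e)) =
          (Finset.univ.filter (fun π : Equiv.Perm (Fin (m+1)) =>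
            Avoids321 π ∧ wdefc π = b ∧ wexc π = c ∧
            des π = d ∧ ides π = e)).filter (fun π => ¬ p π) := by
          rw [Finset.filter_filter]
          apply filter_congr
          intro π _
          have : ((if p π then 0 else 1) = 1) ↔ ¬ p π := by
            by_cases hz : p π
            · simp [hz]
            · simp [hz]
          rw [this]
          tauto
        have h2 : (Finset.univ.filter (fun π : Equiv.Perm (Fin (m+1)) =>
            Avoids321 π ∧ p π ∧ wdefc π = b ∧ wexc π = c ∧
            des π = d ∧ ides π = e)) =
          (Finset.univ.filter (fun π : Equiv.Perm (Fin (m+1)) =>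
            Avoids321 π ∧ wdefc π = b ∧ wexc π = c ∧
            des π = d ∧ ides π = e)).filter (fun π => p π) := by
          rw [Finset.filter_filter]
          apply filter_congr
          intro π _
          tauto
        rw [h1, h2]
        rw [Nat.add_comm]
        exact Finset.card_filter_add_card_filter_not (fun π => p π)
      have hA := split0 (fun π => π 0 = 0) (fun π => instDecidableEqFin _ _ _)
      have hB := split0 (fun π => π (Fin.last m) = Fin.last m) (fun π => instDecidableEqFin _ _ _)
      have hk := key b c d e
      beta_reduce at hA hB
      have h := hA.trans hB.symm
      rw [hk] at h
      exact Nat.add_right_cancel h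
  · -- a ≥ 2 : both sides empty
    have e1 : (Finset.univ.filter (fun π : Equiv.Perm (Fin (m+1)) =>
        Avoids321 π ∧ (if π 0 = 0 then 0 else 1) = a ∧ wdefc π = b ∧ wexc π = c ∧
        des π = d ∧ ides π = e)) = ∅ := by
      rw [Finset.filter_eq_empty_iff]
      rintro π - ⟨-, h1, -⟩
      by_cases hz : π 0 = 0
      · rw [if_pos hz] at h1; omega
      · rw [if_neg hz] at h1; omega
    have e2 : (Finset.univ.filter (fun π : Equiv.Perm (Fin (m+1)) =>
        Avoids321 π ∧ (if π (Fin.last m) = Fin.last m then 0 else 1) = a ∧ wdefc π = b ∧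
        wexc π = c ∧ des π = d ∧ ides π = e)) = ∅ := by
      rw [Finset.filter_eq_empty_iff]
      rintro π - ⟨-, h1, -⟩
      by_cases hz : π (Fin.last m) = Fin.last m
      · rw [if_pos hz] at h1; omega
      · rw [if_neg hz] at h1; omega
    rw [e1, e2]
end

section
/- For every n ≥ 1 and every pair of values (a,b), the number of permutations π of {1,...,n} with (rlm(π), wnm(π)−1) = (a,b) equals the number of permutations σ of {1,...,n} with (wnm(σ)−1, rlm(σ)) = (a,b). That is, the pair of statistics (rlm, wnm−1) is equidistributed with (wnm−1, rlm) over permutations of length n. -/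
open Finset

namespace Aux

open PermStats Equiv

/-- wnm equals the number of left-to-right maxima. -/
theorem wnm_eq_lrmax {n : ℕ} (π : Equiv.Perm (Fin n)) : wnm π = lrmax π := by
  unfold wnm lrmax
  congr 1
  apply Finset.filter_congr
  intro i _
  constructor
  · rintro ⟨hwe, hnm⟩ j hj
    by_contra hc
    have hne : π j ≠ π i := fun h => absurd (π.injective h) (ne_of_lt hj)
    have hji : π i < π j := lt_of_le_of_ne (not_lt.mp hc) (Ne.symm hne)
    have hk : ∀ k, i < k → π i < π k := by
      intro k hk
      by_contra hc2
      have hne2 : π k ≠ π i := fun h => absurd (π.injective h) (ne_of_gt hk)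
      exact hnm ⟨j, k, hj, hk, hji, lt_of_le_of_ne (not_lt.mp hc2) hne2⟩
    have hsub : Finset.Iio (π i) ⊆ (Finset.Iio i \ {j}).image π := by
      intro v hv
      rw [Finset.mem_Iio] at hv
      set w := π.symm v with hw
      have hpw : π w = v := π.apply_symm_apply v
      refine Finset.mem_image.2 ⟨w, ?_, hpw⟩
      have hwi : w ≠ i := by
        intro h; rw [h] at hpw; rw [hpw] at hv; exact lt_irrefl _ hv
      have hwlt : w < i := by
        rcases lt_or_gt_of_ne hwi with h | h
        · exact h
        · exact absurd (hpw ▸ hk w h) (not_lt.mpr (le_of_lt hv))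
      have hwj : w ≠ j := by
        intro h; rw [h] at hpw; exact absurd (hpw ▸ hji) (not_lt.mpr (le_of_lt hv))
      simp [Finset.mem_sdiff, Finset.mem_Iio, hwlt, hwj]
    have hcard := Finset.card_le_card hsub
    rw [Fin.card_Iio, Finset.card_image_of_injective _ π.injective,
      Finset.card_sdiff_of_subset (by simp [Finset.mem_Iio, hj]), Fin.card_Iio,
      Finset.card_singleton] at hcard
    have h1 : (i : ℕ) ≤ (π i : ℕ) := hwe
    have h2 : 0 < (i : ℕ) := lt_of_le_of_lt (Nat.zero_le _) hj
    omega
  · intro hlr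
    refine ⟨?_, ?_⟩
    · have hsub : (Finset.Iic i).image π ⊆ Finset.Iic (π i) := by
        intro v hv
        rcases Finset.mem_image.1 hv with ⟨j, hj, rfl⟩
        rw [Finset.mem_Iic] at hj ⊢
        rcases lt_or_eq_of_le hj with h | h
        · exact le_of_lt (hlr j h)
        · exact le_of_eq (by rw [h])
      have hcard := Finset.card_le_card hsub
      rw [Finset.card_image_of_injective _ π.injective, Fin.card_Iic, Fin.card_Iic] at hcard
      exact Fin.le_def.mpr (by omega)
    · rintro ⟨j, k, hji, hik, h1, h2⟩
      exact absurd (hlr j hji) (not_lt.mpr (le_of_lt h1))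

end Aux

namespace Aux2
open PermStats Equiv
open scoped Classical

variable {m : ℕ}

/-- Insert the value `1` at position `k`. -/
def ins (σ : Equiv.Perm (Fin (m+1))) (k : Fin (m+2)) : Equiv.Perm (Fin (m+2)) :=
  ((finSuccEquiv' k).trans σ.optionCongr).trans (finSuccEquiv' (1 : Fin (m+2))).symm

@[simp] theorem ins_apply_self (σ : Equiv.Perm (Fin (m+1))) (k : Fin (m+2)) :
    ins σ k k = 1 := by
  simp [ins]

@[simp] theorem ins_apply_succAbove (σ : Equiv.Perm (Fin (m+1))) (k : Fin (m+2)) (i : Fin (m+1)) :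
    ins σ k (k.succAbove i) = (1 : Fin (m+2)).succAbove (σ i) := by
  simp [ins]

theorem succAbove_val (k : Fin (m+2)) (i : Fin (m+1)) :
    (k.succAbove i : ℕ) = if (i : ℕ) < (k : ℕ) then (i : ℕ) else (i : ℕ) + 1 := by
  rw [Fin.succAbove]
  split
  · rename_i h
    rw [if_pos]
    · simp
    · simpa [Fin.lt_def] using h
  · rename_i h
    rw [if_neg]
    · simp
    · simpa [Fin.lt_def] using h

theorem vs_val (v : Fin (m+1)) :
    (((1 : Fin (m+2)).succAbove v : Fin (m+2)) : ℕ) = if (v : ℕ) = 0 then 0 else (v : ℕ) + 1 := by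
  rw [succAbove_val, Fin.val_one]
  split <;> split <;> omega

theorem vs_lt_vs {a b : Fin (m+1)} :
    (1 : Fin (m+2)).succAbove a < (1 : Fin (m+2)).succAbove b ↔ a < b :=
  Fin.succAbove_lt_succAbove_iff

theorem vs_eq_zero {a : Fin (m+1)} : (1 : Fin (m+2)).succAbove a = 0 ↔ a = 0 := by
  rw [Fin.ext_iff, Fin.ext_iff, vs_val]
  simp only [Fin.val_zero]
  split <;> omega

theorem one_lt_vs {a : Fin (m+1)} : (1 : Fin (m+2)) < (1 : Fin (m+2)).succAbove a ↔ a ≠ 0 := by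
  rw [Fin.lt_def, vs_val, Fin.val_one, Ne, Fin.ext_iff, Fin.val_zero]
  split <;> omega

theorem ins_eq_zero_iff (σ : Equiv.Perm (Fin (m+1))) (k : Fin (m+2)) (j : Fin (m+2)) :
    ins σ k j = 0 ↔ j = k.succAbove (σ⁻¹ 0) := by
  by_cases hj : j = k
  · subst hj
    simp only [ins_apply_self]
    constructor
    · intro h; exact absurd h one_ne_zero
    · intro h; exact absurd h.symm (Fin.succAbove_ne _ _)
  · obtain ⟨i, rfl⟩ := Fin.exists_succAbove_eq hj
    rw [ins_apply_succAbove, vs_eq_zero, Fin.succAbove_right_inj]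
    constructor
    · intro h; rw [Equiv.Perm.eq_inv_iff_eq, h]
    · rintro rfl; simp

/-- The predicate counted by `rlm`. -/
def Cpred {N : ℕ} (π : Equiv.Perm (Fin N)) (i : Fin N) : Prop :=
  ∃ k : Fin N, (π k : ℕ) = 0 ∧ i < k ∧ ∀ j, i < j → j < k → π j < π i

theorem rlm_eq_sum {N : ℕ} (π : Equiv.Perm (Fin N)) :
    rlm π = ∑ i : Fin N, if Cpred π i then 1 else 0 := by
  rw [rlm, Finset.card_filter]
  exact Finset.sum_congr rfl fun x _ => by congr

theorem lrmax_eq_sum {N : ℕ} (π : Equiv.Perm (Fin N)) :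
    lrmax π = ∑ i : Fin N, if (∀ j, j < i → π j < π i) then 1 else 0 := by
  rw [lrmax, Finset.card_filter]

variable {σ : Equiv.Perm (Fin (m+1))} {k : Fin (m+2)}

theorem fin_val_zero_iff {N : ℕ} [NeZero N] (x : Fin N) : (x : ℕ) = 0 ↔ x = 0 := by
  rw [Fin.ext_iff, Fin.val_zero]

theorem ins_val_eq_zero_iff (j : Fin (m+2)) :
    ((ins σ k j : Fin (m+2)) : ℕ) = 0 ↔ j = k.succAbove (σ⁻¹ 0) := by
  rw [fin_val_zero_iff, ins_eq_zero_iff]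

theorem Cp_succAbove (i : Fin (m+1)) :
    Cpred (ins σ k) (k.succAbove i) ↔ Cpred σ i := by
  constructor
  · rintro ⟨z, hz0, hlt, hbet⟩
    rw [ins_val_eq_zero_iff] at hz0
    subst hz0
    refine ⟨σ⁻¹ 0, by simp, Fin.succAbove_lt_succAbove_iff.mp hlt, ?_⟩
    intro j hj1 hj2
    have := hbet (k.succAbove j) (Fin.succAbove_lt_succAbove_iff.mpr hj1)
      (Fin.succAbove_lt_succAbove_iff.mpr hj2)
    rw [ins_apply_succAbove, ins_apply_succAbove] at this
    exact vs_lt_vs.mp this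
  · rintro ⟨z, hz0, hlt, hbet⟩
    have hzz : z = σ⁻¹ 0 := by
      rw [Equiv.Perm.eq_inv_iff_eq]
      exact Fin.ext hz0
    subst hzz
    refine ⟨k.succAbove (σ⁻¹ 0), by rw [ins_val_eq_zero_iff],
      Fin.succAbove_lt_succAbove_iff.mpr hlt, ?_⟩
    intro j hj1 hj2
    by_cases hjk : j = k
    · subst hjk
      rw [ins_apply_self, ins_apply_succAbove]
      rw [one_lt_vs]
      intro h0
      rw [← h0] at hlt
      simp at hlt
    · obtain ⟨j', rfl⟩ := Fin.exists_succAbove_eq hjk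
      rw [ins_apply_succAbove, ins_apply_succAbove]
      exact vs_lt_vs.mpr (hbet j' (Fin.succAbove_lt_succAbove_iff.mp hj1)
        (Fin.succAbove_lt_succAbove_iff.mp hj2))

theorem Cp_self : Cpred (ins σ k) k ↔ k = Fin.castSucc (σ⁻¹ 0) := by
  constructor
  · rintro ⟨z, hz0, hlt, hbet⟩
    rw [ins_val_eq_zero_iff] at hz0
    subst hz0
    have hz1 : ((k.succAbove (σ⁻¹ 0) : Fin (m+2)) : ℕ) = (k : ℕ) + 1 := by
      by_contra hc
      have hkz : (k : ℕ) < (k.succAbove (σ⁻¹ 0) : ℕ) := hlt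
      have hlt2 : (k : ℕ) + 1 < (k.succAbove (σ⁻¹ 0) : ℕ) := by omega
      set j : Fin (m+2) := ⟨(k : ℕ) + 1, lt_trans hlt2 (k.succAbove (σ⁻¹ 0)).isLt⟩ with hjdef
      have h1 : k < j := by rw [Fin.lt_def]; simp [hjdef]
      have h2 : j < k.succAbove (σ⁻¹ 0) := by rw [Fin.lt_def]; simpa [hjdef] using hlt2
      have h3 := hbet j h1 h2
      rw [ins_apply_self, Fin.lt_def, Fin.val_one] at h3
      have h4 : ins σ k j = 0 := by rw [Fin.ext_iff, Fin.val_zero]; omega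
      rw [ins_eq_zero_iff] at h4
      rw [h4] at h2
      exact lt_irrefl _ h2
    rw [succAbove_val] at hz1
    rw [Fin.ext_iff, Fin.coe_castSucc]
    split at hz1 <;> omega
  · intro hk
    have hkv : (k : ℕ) = ((σ⁻¹ 0 : Fin (m+1)) : ℕ) := by rw [hk]; simp
    have hzv : ((k.succAbove (σ⁻¹ 0) : Fin (m+2)) : ℕ) = (k : ℕ) + 1 := by
      rw [succAbove_val]; split <;> omega
    refine ⟨k.succAbove (σ⁻¹ 0), by rw [ins_val_eq_zero_iff], by rw [Fin.lt_def]; omega, ?_⟩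
    intro j hj1 hj2
    rw [Fin.lt_def] at hj1 hj2
    omega

theorem rlm_ins (σ : Equiv.Perm (Fin (m+1))) (k : Fin (m+2)) :
    rlm (ins σ k) = rlm σ + (if k = Fin.castSucc (σ⁻¹ 0) then 1 else 0) := by
  rw [rlm_eq_sum, rlm_eq_sum, Fin.sum_univ_succAbove _ k]
  have h1 : (if Cpred (ins σ k) k then (1:ℕ) else 0)
      = (if k = Fin.castSucc (σ⁻¹ 0) then 1 else 0) := by
    simp only [Cp_self]
  have h2 : ∀ i : Fin (m+1),
      (if Cpred (ins σ k) (k.succAbove i) then (1:ℕ) else 0) = (if Cpred σ i then 1 else 0) := by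
    intro i; simp only [Cp_succAbove]
  rw [h1, Finset.sum_congr rfl (fun i _ => h2 i), add_comm]

/-- The predicate counted by `lrmax`. -/
def Lpred {N : ℕ} (π : Equiv.Perm (Fin N)) (i : Fin N) : Prop :=
  ∀ j, j < i → π j < π i

theorem Lp_zero {N : ℕ} (π : Equiv.Perm (Fin (N+1))) : Lpred π 0 := by
  intro j hj; exact absurd hj (Fin.not_lt_zero j)

/-- The special position whose choice increments `lrmax`. -/
def qpos (σ : Equiv.Perm (Fin (m+1))) : Fin (m+2) := if σ 0 = 0 then 1 else 0

theorem Lp_succAbove {i : Fin (m+1)} (hi : i ≠ 0) :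
    Lpred (ins σ k) (k.succAbove i) ↔ Lpred σ i := by
  by_cases hσ : σ i = 0
  · constructor
    · intro hL
      exfalso
      have h0 : (0 : Fin (m+1)) < i := Fin.pos_of_ne_zero hi
      have := hL (k.succAbove 0) (Fin.succAbove_lt_succAbove_iff.mpr h0)
      rw [ins_apply_succAbove, ins_apply_succAbove, hσ] at this
      rw [vs_eq_zero.mpr rfl] at this
      exact absurd this (Fin.not_lt_zero _)
    · intro hL
      exfalso
      have h0 : (0 : Fin (m+1)) < i := Fin.pos_of_ne_zero hi
      have := hL 0 h0
      rw [hσ] at this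
      exact absurd this (Fin.not_lt_zero _)
  · constructor
    · intro hL j hj
      have := hL (k.succAbove j) (Fin.succAbove_lt_succAbove_iff.mpr hj)
      rw [ins_apply_succAbove, ins_apply_succAbove] at this
      exact vs_lt_vs.mp this
    · intro hL j hj
      by_cases hjk : j = k
      · subst hjk
        rw [ins_apply_self, ins_apply_succAbove, one_lt_vs]
        exact hσ
      · obtain ⟨j', rfl⟩ := Fin.exists_succAbove_eq hjk
        rw [ins_apply_succAbove, ins_apply_succAbove]
        exact vs_lt_vs.mpr (hL j' (Fin.succAbove_lt_succAbove_iff.mp hj))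

theorem Lp_claim2 :
    ((if Lpred (ins σ k) k then (1:ℕ) else 0) + if Lpred (ins σ k) (k.succAbove 0) then 1 else 0)
      = (if k = qpos σ then 1 else 0) + 1 := by
  by_cases hk : k = 0
  · subst hk
    have hps : (0 : Fin (m+2)).succAbove 0 = 1 := rfl
    have h0 : ins σ 0 0 = 1 := ins_apply_self σ 0
    have h1 : ins σ 0 1 = (1 : Fin (m+2)).succAbove (σ 0) := by
      have := ins_apply_succAbove σ 0 0
      rwa [hps] at this
    rw [hps]
    have hL1 : Lpred (ins σ 0) 1 ↔ σ 0 ≠ 0 := by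
      constructor
      · intro hL
        have := hL 0 (by rw [Fin.lt_def]; simp)
        rwa [h0, h1, one_lt_vs] at this
      · intro hσ j hj
        have hj0 : j = 0 := (Fin.lt_one_iff _).mp hj
        subst hj0
        rw [h0, h1, one_lt_vs]
        exact hσ
    by_cases hσ : σ 0 = 0
    · rw [if_pos (Lp_zero _), if_neg (by rw [hL1]; exact fun h => h hσ),
        if_neg (by rw [qpos, if_pos hσ]; exact fun h => absurd h.symm one_ne_zero)]
    · rw [if_pos (Lp_zero _), if_pos (hL1.mpr hσ), if_pos (by rw [qpos, if_neg hσ])]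
  · have hps : k.succAbove 0 = 0 := by
      rw [Fin.succAbove_of_castSucc_lt]
      · rfl
      · rw [Fin.lt_def]
        simp only [Fin.coe_castSucc, Fin.val_zero]
        exact Nat.pos_of_ne_zero (fun h => hk (Fin.ext (by simpa using h)))
    have h0 : ins σ k 0 = (1 : Fin (m+2)).succAbove (σ 0) := by
      have := ins_apply_succAbove σ k 0
      rwa [hps] at this
    rw [hps, if_pos (Lp_zero _)]
    have hiff : Lpred (ins σ k) k ↔ k = qpos σ := by
      by_cases hσ : σ 0 = 0
      · rw [qpos, if_pos hσ]
        constructor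
        · intro hL
          by_contra hk1
          have h1k : (1 : Fin (m+2)) < k := by
            rw [Fin.lt_def, Fin.val_one]
            have ha : (k:ℕ) ≠ 0 := fun h => hk (Fin.ext (by simpa using h))
            have hb : (k:ℕ) ≠ 1 := fun h => hk1 (Fin.ext (by simpa using h))
            omega
          have := hL 1 h1k
          rw [ins_apply_self, Fin.lt_def, Fin.val_one] at this
          have h4 : ins σ k 1 = 0 := by rw [Fin.ext_iff, Fin.val_zero]; omega
          rw [ins_eq_zero_iff] at h4
          have hz : (σ⁻¹ 0 : Fin (m+1)) = 0 := by
            rw [Equiv.Perm.inv_eq_iff_eq]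
            exact hσ.symm
          rw [hz, hps] at h4
          exact one_ne_zero h4
        · rintro rfl
          intro j hj
          have hj0 : j = 0 := (Fin.lt_one_iff _).mp hj
          subst hj0
          rw [h0, ins_apply_self, hσ, vs_eq_zero.mpr rfl, Fin.lt_def, Fin.val_zero, Fin.val_one]
          omega
      · rw [qpos, if_neg hσ]
        constructor
        · intro hL
          exfalso
          have := hL 0 (Fin.pos_of_ne_zero hk)
          rw [h0, ins_apply_self, Fin.lt_def, Fin.val_one] at this
          have h4 : (1 : Fin (m+2)).succAbove (σ 0) = 0 := by
            rw [Fin.ext_iff, Fin.val_zero]; omega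
          rw [vs_eq_zero] at h4
          exact hσ h4
        · intro h; exact absurd h hk
    rw [if_congr hiff rfl rfl]

theorem lrmax_ins (σ : Equiv.Perm (Fin (m+1))) (k : Fin (m+2)) :
    lrmax (ins σ k) = lrmax σ + (if k = qpos σ then 1 else 0) := by
  have hsum : ∀ {N : ℕ} (π : Equiv.Perm (Fin N)),
      lrmax π = ∑ i : Fin N, if Lpred π i then 1 else 0 := by
    intro N π
    rw [lrmax, Finset.card_filter]
    exact Finset.sum_congr rfl fun x _ => by congr
  rw [hsum (ins σ k), hsum σ, Fin.sum_univ_succAbove _ k, Fin.sum_univ_succ,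
    Fin.sum_univ_succ (fun i : Fin (m+1) => if Lpred σ i then (1:ℕ) else 0)]
  have hrest : ∀ i : Fin m,
      (if Lpred (ins σ k) (k.succAbove i.succ) then (1:ℕ) else 0)
        = (if Lpred σ i.succ then 1 else 0) := by
    intro i
    simp only [Lp_succAbove (Fin.succ_ne_zero i)]
  rw [Finset.sum_congr rfl (fun i _ => hrest i), if_pos (Lp_zero σ), ← add_assoc, Lp_claim2]
  ring

/-- The special position whose choice increments `rlm`. -/
def ppos (σ : Equiv.Perm (Fin (m+1))) : Fin (m+2) := Fin.castSucc (σ⁻¹ 0)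

theorem rlm_ins' (σ : Equiv.Perm (Fin (m+1))) (k : Fin (m+2)) :
    rlm (ins σ k) = rlm σ + (if k = ppos σ then 1 else 0) := rlm_ins σ k

theorem ppos_ne_qpos (σ : Equiv.Perm (Fin (m+1))) : ppos σ ≠ qpos σ := by
  by_cases hσ : σ 0 = 0
  · have hz : (σ⁻¹ 0 : Fin (m+1)) = 0 := by rw [Equiv.Perm.inv_eq_iff_eq]; exact hσ.symm
    rw [ppos, qpos, hz, if_pos hσ]
    intro h
    rw [Fin.ext_iff, Fin.coe_castSucc, Fin.val_zero, Fin.val_one] at h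
    omega
  · have hz : (σ⁻¹ 0 : Fin (m+1)) ≠ 0 := by
      intro h; rw [Equiv.Perm.inv_eq_iff_eq] at h; exact hσ h.symm
    rw [ppos, qpos, if_neg hσ]
    intro h
    rw [Fin.ext_iff, Fin.coe_castSucc, Fin.val_zero] at h
    exact hz (Fin.ext h)

theorem ins_bijective :
    Function.Bijective (fun p : Equiv.Perm (Fin (m+1)) × Fin (m+2) => ins p.1 p.2) := by
  rw [Fintype.bijective_iff_injective_and_card]
  constructor
  · rintro ⟨σ, k⟩ ⟨σ', k'⟩ h
    simp only at h
    have h1 : ∀ x, ins σ k x = ins σ' k' x := fun x => by rw [h]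
    have hk : k = k' := by
      have h2 : ins σ' k' k = 1 := by rw [← h1 k, ins_apply_self]
      have h3 : ins σ' k' k' = 1 := ins_apply_self σ' k'
      exact (ins σ' k').injective (h2.trans h3.symm)
    subst hk
    have hσ : σ = σ' := by
      apply Equiv.ext
      intro i
      have := h1 (k.succAbove i)
      rw [ins_apply_succAbove, ins_apply_succAbove] at this
      exact Fin.succAbove_right_injective this
    rw [hσ]
  · simp only [Fintype.card_prod, Fintype.card_perm, Fintype.card_fin]
    rw [Nat.factorial_succ (m+1)]
    ring

/-- Joint distribution counter. -/
def F (N a c : ℕ) : ℕ :=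
  ((univ : Finset (Equiv.Perm (Fin N))).filter (fun π => rlm π = a ∧ lrmax π = c)).card

theorem F_eq_sum (N a c : ℕ) :
    F N a c = ∑ π : Equiv.Perm (Fin N), if rlm π = a ∧ lrmax π = c then 1 else 0 := by
  rw [F, Finset.card_filter]

theorem F_lrmax_zero (N a : ℕ) : F (N+1) a 0 = 0 := by
  rw [F, Finset.card_eq_zero, Finset.filter_eq_empty_iff]
  intro π _
  rintro ⟨-, h⟩
  have h0 : (0 : Fin (N+1)) ∈ (univ.filter (fun i : Fin (N+1) => ∀ j, j < i → π j < π i)) := by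
    simp only [Finset.mem_filter, Finset.mem_univ, true_and]
    intro j hj
    exact absurd hj (Fin.not_lt_zero j)
  have := Finset.card_pos.mpr ⟨0, h0⟩
  rw [lrmax] at h
  omega

theorem inner_sum (σ : Equiv.Perm (Fin (m+1))) (a c : ℕ) :
    (∑ k : Fin (m+2), if rlm (ins σ k) = a ∧ lrmax (ins σ k) = c then (1:ℕ) else 0)
      = (if rlm σ + 1 = a ∧ lrmax σ = c then 1 else 0)
        + (if rlm σ = a ∧ lrmax σ + 1 = c then 1 else 0)
        + m * (if rlm σ = a ∧ lrmax σ = c then 1 else 0) := by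
  have hP : (ppos σ) ∈ (univ : Finset (Fin (m+2))) := Finset.mem_univ _
  rw [Finset.sum_eq_sum_sdiff_singleton_add hP]
  have hQ : (qpos σ) ∈ (univ : Finset (Fin (m+2))) \ {ppos σ} := by
    simp [Finset.mem_sdiff, (ppos_ne_qpos σ).symm]
  rw [Finset.sum_eq_sum_sdiff_singleton_add hQ]
  have hPval : (if rlm (ins σ (ppos σ)) = a ∧ lrmax (ins σ (ppos σ)) = c then (1:ℕ) else 0)
      = (if rlm σ + 1 = a ∧ lrmax σ = c then 1 else 0) := by
    rw [rlm_ins', lrmax_ins, if_pos rfl, if_neg (ppos_ne_qpos σ)]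
    simp only [Nat.add_zero]
  have hQval : (if rlm (ins σ (qpos σ)) = a ∧ lrmax (ins σ (qpos σ)) = c then (1:ℕ) else 0)
      = (if rlm σ = a ∧ lrmax σ + 1 = c then 1 else 0) := by
    rw [rlm_ins', lrmax_ins, if_pos rfl, if_neg (ppos_ne_qpos σ).symm]
    simp only [Nat.add_zero]
  have hrest : ∀ k ∈ ((univ : Finset (Fin (m+2))) \ {ppos σ}) \ {qpos σ},
      (if rlm (ins σ k) = a ∧ lrmax (ins σ k) = c then (1:ℕ) else 0)
        = (if rlm σ = a ∧ lrmax σ = c then 1 else 0) := by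
    intro k hk
    simp only [Finset.mem_sdiff, Finset.mem_univ, Finset.mem_singleton, true_and] at hk
    rw [rlm_ins', lrmax_ins, if_neg hk.1, if_neg hk.2]
    simp only [Nat.add_zero]
  rw [Finset.sum_congr rfl hrest, Finset.sum_const, hPval, hQval]
  have hcard : (((univ : Finset (Fin (m+2))) \ {ppos σ}) \ {qpos σ}).card = m := by
    rw [Finset.card_sdiff_of_subset (by simpa using hQ), Finset.card_sdiff_of_subset (by simp)]
    simp
  rw [hcard, smul_eq_mul]
  ring

theorem F_step (a c : ℕ) :
    F (m+2) a c = (if a = 0 then 0 else F (m+1) (a-1) c)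
      + (if c = 0 then 0 else F (m+1) a (c-1)) + m * F (m+1) a c := by
  rw [F_eq_sum]
  rw [← Function.Bijective.sum_comp (ins_bijective (m := m))
    (fun π => if rlm π = a ∧ lrmax π = c then (1:ℕ) else 0)]
  rw [Fintype.sum_prod_type]
  have : ∀ σ : Equiv.Perm (Fin (m+1)),
      (∑ k : Fin (m+2), if rlm (ins σ k) = a ∧ lrmax (ins σ k) = c then (1:ℕ) else 0)
      = (if rlm σ + 1 = a ∧ lrmax σ = c then 1 else 0)
        + (if rlm σ = a ∧ lrmax σ + 1 = c then 1 else 0)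
        + m * (if rlm σ = a ∧ lrmax σ = c then 1 else 0) := fun σ => inner_sum σ a c
  rw [Finset.sum_congr rfl (fun σ _ => this σ)]
  rw [Finset.sum_add_distrib, Finset.sum_add_distrib, ← Finset.mul_sum]
  congr 1
  · congr 1
    · -- first term
      by_cases ha : a = 0
      · subst ha
        rw [if_pos rfl, Finset.sum_eq_zero]
        intro σ _
        rw [if_neg]
        rintro ⟨h, -⟩
        omega
      · obtain ⟨a', rfl⟩ := Nat.exists_eq_succ_of_ne_zero ha
        rw [if_neg (Nat.succ_ne_zero a'), Nat.succ_sub_one, F_eq_sum]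
        apply Finset.sum_congr rfl
        intro σ _
        apply if_congr _ rfl rfl
        constructor
        · rintro ⟨h1, h2⟩; exact ⟨by omega, h2⟩
        · rintro ⟨h1, h2⟩; exact ⟨by omega, h2⟩
    · -- second term
      by_cases hc : c = 0
      · subst hc
        rw [if_pos rfl, Finset.sum_eq_zero]
        intro σ _
        rw [if_neg]
        rintro ⟨-, h⟩
        omega
      · obtain ⟨c', rfl⟩ := Nat.exists_eq_succ_of_ne_zero hc
        rw [if_neg (Nat.succ_ne_zero c'), Nat.succ_sub_one, F_eq_sum]
        apply Finset.sum_congr rfl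
        intro σ _
        apply if_congr _ rfl rfl
        constructor
        · rintro ⟨h1, h2⟩; exact ⟨h1, by omega⟩
        · rintro ⟨h1, h2⟩; exact ⟨h1, by omega⟩
  · rw [F_eq_sum]

theorem F_one (a c : ℕ) : F 1 a c = if a = 0 ∧ c = 1 then 1 else 0 := by
  have hrlm : ∀ π : Equiv.Perm (Fin 1), rlm π = 0 := by
    intro π
    rw [rlm, Finset.card_eq_zero, Finset.filter_eq_empty_iff]
    intro i _
    rintro ⟨kk, -, hlt, -⟩
    rw [Subsingleton.elim i kk] at hlt
    exact lt_irrefl _ hlt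
  have hlrmax : ∀ π : Equiv.Perm (Fin 1), lrmax π = 1 := by
    intro π
    rw [lrmax, Finset.filter_true_of_mem, Finset.card_univ]
    · simp [Fintype.card_perm]
    · intro i _ j hj
      rw [Subsingleton.elim j i] at hj
      exact absurd hj (lt_irrefl i)
  rw [F]
  by_cases h : a = 0 ∧ c = 1
  · rw [Finset.filter_true_of_mem, Finset.card_univ, if_pos h]
    · simp [Fintype.card_perm]
    · intro π _
      exact ⟨by rw [hrlm π, h.1], by rw [hlrmax π, h.2]⟩
  · rw [if_neg h, Finset.card_eq_zero, Finset.filter_eq_empty_iff]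
    intro π _
    rintro ⟨h1, h2⟩
    rw [hrlm π] at h1
    rw [hlrmax π] at h2
    exact h ⟨h1.symm, h2.symm⟩

theorem F_symm : ∀ N a b, F (N+1) a (b+1) = F (N+1) b (a+1) := by
  intro N
  induction N with
  | zero =>
    intro a b
    rw [F_one, F_one]
    by_cases ha : a = 0 <;> by_cases hb : b = 0 <;> simp [ha, hb]
  | succ M IH =>
    intro a b
    rw [show M + 1 + 1 = M + 2 from rfl, F_step, F_step]
    have h3 : F (M+1) a (b+1) = F (M+1) b (a+1) := IH a b
    have e1 : (if a = 0 then 0 else F (M+1) (a-1) (b+1)) = F (M+1) b a := by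
      rcases Nat.eq_zero_or_pos a with ha | ha
      · subst ha
        rw [if_pos rfl, F_lrmax_zero]
      · obtain ⟨a', rfl⟩ := Nat.exists_eq_succ_of_ne_zero (Nat.pos_iff_ne_zero.mp ha)
        rw [if_neg (Nat.succ_ne_zero a'), Nat.succ_sub_one, IH a' b]
    have e2 : (if b + 1 = 0 then 0 else F (M+1) a (b+1-1)) = F (M+1) a b := by
      rw [if_neg (Nat.succ_ne_zero b), Nat.succ_sub_one]
    have e3 : (if b = 0 then 0 else F (M+1) (b-1) (a+1)) = F (M+1) a b := by
      rcases Nat.eq_zero_or_pos b with hb | hb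
      · subst hb
        rw [if_pos rfl, F_lrmax_zero]
      · obtain ⟨b', rfl⟩ := Nat.exists_eq_succ_of_ne_zero (Nat.pos_iff_ne_zero.mp hb)
        rw [if_neg (Nat.succ_ne_zero b'), Nat.succ_sub_one, IH a b']
    have e4 : (if a + 1 = 0 then 0 else F (M+1) b (a+1-1)) = F (M+1) b a := by
      rw [if_neg (Nat.succ_ne_zero a), Nat.succ_sub_one]
    rw [e1, e2, e3, e4, h3]
    ring

theorem lrmax_pos {N : ℕ} (π : Equiv.Perm (Fin (N+1))) : 1 ≤ lrmax π := by
  have h0 : (0 : Fin (N+1)) ∈ (univ.filter (fun i : Fin (N+1) => ∀ j, j < i → π j < π i)) := by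
    simp only [Finset.mem_filter, Finset.mem_univ, true_and]
    intro j hj
    exact absurd hj (Fin.not_lt_zero j)
  exact Finset.card_pos.mpr ⟨0, h0⟩

end Aux2

open PermStats in
open scoped Classical in
/-- The pair of statistics `(rlm, wnm - 1)` is equidistributed with
`(wnm - 1, rlm)` over permutations of length `n`. -/
theorem stmt3 (n : ℕ) (hn : 1 ≤ n) (a b : ℕ) :
    ((Finset.univ : Finset (Equiv.Perm (Fin n))).filter (fun π =>
        rlm π = a ∧ wnm π - 1 = b)).card =
    ((Finset.univ : Finset (Equiv.Perm (Fin n))).filter (fun σ =>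
        wnm σ - 1 = a ∧ rlm σ = b)).card := by
  obtain ⟨N, rfl⟩ : ∃ N, n = N + 1 := ⟨n - 1, by omega⟩
  have h1 : ∀ π : Equiv.Perm (Fin (N+1)),
      (rlm π = a ∧ wnm π - 1 = b) ↔ (rlm π = a ∧ lrmax π = b + 1) := by
    intro π
    rw [Aux.wnm_eq_lrmax]
    have := Aux2.lrmax_pos π
    constructor
    · rintro ⟨x, y⟩; exact ⟨x, by omega⟩
    · rintro ⟨x, y⟩; exact ⟨x, by omega⟩
  have h2 : ∀ π : Equiv.Perm (Fin (N+1)),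
      (wnm π - 1 = a ∧ rlm π = b) ↔ (rlm π = b ∧ lrmax π = a + 1) := by
    intro π
    rw [Aux.wnm_eq_lrmax]
    have := Aux2.lrmax_pos π
    constructor
    · rintro ⟨x, y⟩; exact ⟨y, by omega⟩
    · rintro ⟨x, y⟩; exact ⟨by omega, x⟩
  have e1 : ((Finset.univ : Finset (Equiv.Perm (Fin (N+1)))).filter (fun π =>
        rlm π = a ∧ wnm π - 1 = b)).card = Aux2.F (N+1) a (b+1) := by
    rw [Aux2.F]
    congr 1
    apply Finset.filter_congr
    intro π _
    exact h1 π
  have e2 : ((Finset.univ : Finset (Equiv.Perm (Fin (N+1)))).filter (fun σ =>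
        wnm σ - 1 = a ∧ rlm σ = b)).card = Aux2.F (N+1) b (a+1) := by
    rw [Aux2.F]
    congr 1
    apply Finset.filter_congr
    intro π _
    exact h2 π
  rw [e1, e2, Aux2.F_symm]
end

section
/- Let π = π_1π_2⋯π_n be a permutation of {1,...,n}. An index i is both a weak excedance and a non-mid-point of π if and only if π_i is an LR-maximum of π (i.e., π_i > π_j for all j < i). Consequently wnm(π) = lrmax(π) for all permutations π. -/
open Finset

open PermStats in
/-- An index `i` is both a weak excedance and a non-mid-point of `π` iff `π i`
is a left-to-right maximum of `π`; consequently `wnm π = lrmax π`. -/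
theorem stmt6 (n : ℕ) (π : Equiv.Perm (Fin n)) :
    (∀ i : Fin n,
      (i ≤ π i ∧ ¬ ∃ j k : Fin n, j < i ∧ i < k ∧ π i < π j ∧ π k < π i) ↔
        (∀ j, j < i → π j < π i)) ∧
    wnm π = lrmax π := by
  have key : ∀ i : Fin n,
      ((i ≤ π i ∧ ¬ ∃ j k : Fin n, j < i ∧ i < k ∧ π i < π j ∧ π k < π i) ↔
        (∀ j, j < i → π j < π i)) := by
    intro i
    constructor
    · rintro ⟨h1, h2⟩ j hj
      by_contra hle
      push_neg at hle
      have hji : π i < π j :=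
        lt_of_le_of_ne hle (fun h => (ne_of_lt hj) (π.injective h.symm))
      have hk : ∀ k : Fin n, i < k → π i < π k := by
        intro k hik
        by_contra hle2
        push_neg at hle2
        have hki : π k < π i :=
          lt_of_le_of_ne hle2 (fun h => (ne_of_lt hik) (π.injective h).symm)
        exact h2 ⟨j, k, hj, hik, hji, hki⟩
      have heq : univ.filter (fun p : Fin n => π p < π i)
          = (Finset.Iio (π i)).image π.symm := by
        ext p
        simp only [mem_filter, mem_univ, true_and, Finset.mem_image, Finset.mem_Iio]
        constructor
        · intro h; exact ⟨π p, h, π.symm_apply_apply p⟩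
        · rintro ⟨v, hv, rfl⟩; simpa using hv
      have hcard1 : (univ.filter (fun p : Fin n => π p < π i)).card = (π i : ℕ) := by
        rw [heq, Finset.card_image_of_injective _ π.symm.injective]
        simp
      have hsub : (univ.filter (fun p : Fin n => π p < π i)) ⊆ (Finset.Iio i).erase j := by
        intro p hp
        simp only [mem_filter, mem_univ, true_and] at hp
        rw [Finset.mem_erase, Finset.mem_Iio]
        constructor
        · rintro rfl; exact absurd hji (asymm hp)
        · by_contra hpi
          push_neg at hpi
          rcases lt_or_eq_of_le hpi with h | h
          · exact absurd (hk p h) (asymm hp)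
          · subst h; exact lt_irrefl _ hp
      have hle2 : (π i : ℕ) ≤ ((Finset.Iio i).erase j).card := by
        rw [← hcard1]; exact Finset.card_le_card hsub
      have hjmem : j ∈ Finset.Iio i := Finset.mem_Iio.mpr hj
      have hc : ((Finset.Iio i).erase j).card = (i : ℕ) - 1 := by
        rw [Finset.card_erase_of_mem hjmem, Fin.card_Iio]
      have hipos : 0 < (i : ℕ) := lt_of_le_of_lt (Nat.zero_le _) hj
      have : (i : ℕ) ≤ (π i : ℕ) := h1
      omega
    · intro hm
      constructor
      · have hle : (Finset.Iio i).card ≤ (Finset.Iio (π i)).card := by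
          apply Finset.card_le_card_of_injOn π
          · intro p hp
            exact Finset.mem_Iio.mpr (hm p (Finset.mem_Iio.mp hp))
          · exact fun a _ b _ h => π.injective h
        rw [Fin.card_Iio, Fin.card_Iio] at hle
        exact hle
      · rintro ⟨j, k, hj, hk, h1, h2⟩
        exact absurd (hm j hj) (asymm h1)
  refine ⟨key, ?_⟩
  unfold wnm lrmax
  congr 1
  apply Finset.filter_congr
  intro i _
  simpa using key i
end

section
/- For every n ≥ 1 there exists a bijection ρ from the set S_n^n = {π ∈ S_n : π_n = n} of permutations of {1,...,n} ending in n to the set S_n^1 = {π ∈ S_n : π_n = 1} of permutations ending in 1, such that for every π ∈ S_n^n: rlm(π) = lrmax(ρ(π)) − 1 and lrmax(π) − 1 = rlm(ρ(π)). -/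
open Finset

theorem Equiv.Perm.inv_apply_self {α : Type*} (f : Equiv.Perm α) (x : α) : f⁻¹ (f x) = x :=
  Equiv.symm_apply_apply f x

theorem Equiv.Perm.apply_inv_self {α : Type*} (f : Equiv.Perm α) (x : α) : f (f⁻¹ x) = x :=
  Equiv.apply_symm_apply f x

namespace Stmt13Aux

open Equiv Finset PermStats

variable {m : ℕ}

/-- Insert value `v` at position `p`. -/
def ins (v p : Fin (m + 1)) (e : Equiv.Perm (Fin m)) : Equiv.Perm (Fin (m + 1)) :=
  (finSuccEquiv' p).trans ((e.optionCongr).trans (finSuccEquiv' v).symm)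

@[simp] lemma ins_self (v p : Fin (m + 1)) (e : Equiv.Perm (Fin m)) : ins v p e p = v := by
  simp [ins, finSuccEquiv'_at]

@[simp] lemma ins_succAbove (v p : Fin (m + 1)) (e : Equiv.Perm (Fin m)) (i : Fin m) :
    ins v p e (p.succAbove i) = v.succAbove (e i) := by
  simp [ins, finSuccEquiv'_succAbove]

lemma ins_symm_self (v p : Fin (m + 1)) (e : Equiv.Perm (Fin m)) : (ins v p e)⁻¹ v = p := by
  calc (ins v p e)⁻¹ v = (ins v p e)⁻¹ (ins v p e p) := by rw [ins_self]
    _ = p := Equiv.Perm.inv_apply_self _ _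

/-- Remove the value `v` from a permutation. -/
def rem (v : Fin (m + 1)) (π : Equiv.Perm (Fin (m + 1))) : Equiv.Perm (Fin m) :=
  Equiv.removeNone ((finSuccEquiv' (π⁻¹ v)).symm.trans (π.trans (finSuccEquiv' v)))

lemma succAbove_rem (v : Fin (m + 1)) (π : Equiv.Perm (Fin (m + 1))) (i : Fin m) :
    v.succAbove (rem v π i) = π ((π⁻¹ v).succAbove i) := by
  have hne : π ((π⁻¹ v).succAbove i) ≠ v := by
    intro h
    have h2 : π ((π⁻¹ v).succAbove i) = π (π⁻¹ v) := by
      rw [h, Equiv.Perm.apply_inv_self]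
    exact Fin.succAbove_ne (π⁻¹ v) i (π.injective h2)
  obtain ⟨j, hj⟩ := Fin.exists_succAbove_eq hne
  have hg : ((finSuccEquiv' (π⁻¹ v)).symm.trans (π.trans (finSuccEquiv' v))) (some i) = some j := by
    simp only [Equiv.trans_apply, finSuccEquiv'_symm_some]
    rw [← hj, finSuccEquiv'_succAbove]
  have h2 := Equiv.removeNone_some _ ⟨j, hg⟩
  rw [hg] at h2
  have : rem v π i = j := Option.some_injective _ h2
  rw [this, hj]

lemma ins_rem (v : Fin (m + 1)) (π : Equiv.Perm (Fin (m + 1))) :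
    ins v (π⁻¹ v) (rem v π) = π := by
  ext x
  rcases eq_or_ne x (π⁻¹ v) with rfl | hx
  · rw [ins_self, Equiv.Perm.apply_inv_self]
  · obtain ⟨i, rfl⟩ := Fin.exists_succAbove_eq hx
    rw [ins_succAbove, succAbove_rem]

lemma ins_inj {v p p' : Fin (m + 1)} {e e' : Equiv.Perm (Fin m)}
    (h : ins v p e = ins v p' e') : p = p' ∧ e = e' := by
  have hp : p = p' := by
    rw [← ins_symm_self v p e, h, ins_symm_self]
  subst hp
  refine ⟨rfl, ?_⟩
  ext i
  have h1 : ins v p e (p.succAbove i) = ins v p e' (p.succAbove i) := by rw [h]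
  rw [ins_succAbove, ins_succAbove] at h1
  exact congrArg Fin.val (Fin.succAbove_right_injective h1)

lemma rem_ins (v p : Fin (m + 1)) (e : Equiv.Perm (Fin m)) : rem v (ins v p e) = e := by
  have h1 : ins v ((ins v p e)⁻¹ v) (rem v (ins v p e)) = ins v p e := ins_rem v (ins v p e)
  rw [ins_symm_self] at h1
  exact (ins_inj h1).2

/-- Splitting a filtered count over `Fin (m+1)` at the position `p`. -/
lemma card_split (p : Fin (m + 1)) (P : Fin (m + 1) → Prop) [DecidablePred P] :
    (univ.filter P).card
      = (univ.filter fun i => P (p.succAbove i)).card + (if P p then 1 else 0) := by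
  rw [Finset.card_filter, Finset.card_filter, Fin.sum_univ_succAbove _ p, add_comm]

lemma rlm_eq (π : Equiv.Perm (Fin (m + 1))) :
    rlm π = (univ.filter fun i : Fin (m + 1) =>
      i < π⁻¹ 0 ∧ ∀ j, i < j → j < π⁻¹ 0 → π j < π i).card := by
  unfold rlm
  congr 1
  apply Finset.filter_congr
  intro i _
  constructor
  · rintro ⟨k, hk, hik, h⟩
    have hk0 : π k = 0 := by
      apply Fin.ext; simpa using hk
    have : k = π⁻¹ 0 := by rw [← hk0, Equiv.Perm.inv_apply_self]
    subst this
    exact ⟨hik, h⟩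
  · rintro ⟨hik, h⟩
    exact ⟨π⁻¹ 0, by simp, hik, h⟩

lemma lrmax_ins0 (p : Fin (m + 1)) (e : Equiv.Perm (Fin m)) :
    lrmax (ins 0 p e) = lrmax e + (if p = 0 then 1 else 0) := by
  unfold lrmax
  rw [card_split p]
  congr 1
  · congr 1
    apply Finset.filter_congr
    intro i _
    constructor
    · intro h j' hj'
      have := h (p.succAbove j') (by rwa [Fin.succAbove_lt_succAbove_iff])
      rwa [ins_succAbove, ins_succAbove, Fin.zero_succAbove, Fin.zero_succAbove,
        Fin.succ_lt_succ_iff] at this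
    · intro h j hj
      rcases eq_or_ne j p with rfl | hne
      · rw [ins_self, ins_succAbove, Fin.zero_succAbove]
        exact Fin.succ_pos _
      · obtain ⟨j', rfl⟩ := Fin.exists_succAbove_eq hne
        rw [Fin.succAbove_lt_succAbove_iff] at hj
        rw [ins_succAbove, ins_succAbove, Fin.zero_succAbove, Fin.zero_succAbove,
          Fin.succ_lt_succ_iff]
        exact h _ hj
  · have hiff : (∀ j, j < p → ins 0 p e j < ins 0 p e p) ↔ p = 0 := by
      constructor
      · intro h
        by_contra hne
        have h0 : (0 : Fin (m + 1)) < p := Fin.pos_iff_ne_zero.mpr hne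
        have := h 0 h0
        rw [ins_self] at this
        exact Fin.not_lt_zero _ this
      · rintro rfl j hj
        exact absurd hj (Fin.not_lt_zero _)
    simp only [hiff]

lemma rlmax_ins0 (p : Fin (m + 1)) (e : Equiv.Perm (Fin m)) :
    rlmax (ins 0 p e) = rlmax e + (if p = Fin.last m then 1 else 0) := by
  unfold rlmax
  rw [card_split p]
  congr 1
  · congr 1
    apply Finset.filter_congr
    intro i _
    constructor
    · intro h j' hj'
      have := h (p.succAbove j') (by rwa [Fin.succAbove_lt_succAbove_iff])
      rwa [ins_succAbove, ins_succAbove, Fin.zero_succAbove, Fin.zero_succAbove,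
        Fin.succ_lt_succ_iff] at this
    · intro h j hj
      rcases eq_or_ne j p with rfl | hne
      · rw [ins_self, ins_succAbove, Fin.zero_succAbove]
        exact Fin.succ_pos _
      · obtain ⟨j', rfl⟩ := Fin.exists_succAbove_eq hne
        rw [Fin.succAbove_lt_succAbove_iff] at hj
        rw [ins_succAbove, ins_succAbove, Fin.zero_succAbove, Fin.zero_succAbove,
          Fin.succ_lt_succ_iff]
        exact h _ hj
  · have hiff : (∀ j, p < j → ins 0 p e j < ins 0 p e p) ↔ p = Fin.last m := by
      constructor
      · intro h
        by_contra hne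
        have h0 : p < Fin.last m := Fin.lt_last_iff_ne_last.mpr hne
        have := h (Fin.last m) h0
        rw [ins_self] at this
        exact Fin.not_lt_zero _ this
      · rintro rfl j hj
        exact absurd hj (Fin.le_last j).not_gt
    simp only [hiff]

section Outer

variable (τ : Equiv.Perm (Fin (m + 1)))

lemma inslast_castSucc (i : Fin (m + 1)) :
    ins (Fin.last (m + 1)) (Fin.last (m + 1)) τ i.castSucc = (τ i).castSucc := by
  rw [← Fin.succAbove_last_apply, ins_succAbove, Fin.succAbove_last_apply]

lemma ins0last_castSucc (i : Fin (m + 1)) :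
    ins 0 (Fin.last (m + 1)) τ i.castSucc = (τ i).succ := by
  rw [← Fin.succAbove_last_apply, ins_succAbove, Fin.zero_succAbove]

lemma lrmax_inslast :
    lrmax (ins (Fin.last (m + 1)) (Fin.last (m + 1)) τ) = lrmax τ + 1 := by
  set π := ins (Fin.last (m + 1)) (Fin.last (m + 1)) τ with hπ
  unfold lrmax
  rw [card_split (Fin.last (m + 1))]
  congr 1
  · congr 1
    apply Finset.filter_congr
    intro i _
    rw [Fin.succAbove_last_apply]
    constructor
    · intro h j' hj'
      have := h j'.castSucc (by rwa [Fin.castSucc_lt_castSucc_iff])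
      rwa [inslast_castSucc, inslast_castSucc, Fin.castSucc_lt_castSucc_iff] at this
    · intro h j hj
      have hjl : j ≠ Fin.last (m + 1) :=
        Fin.lt_last_iff_ne_last.mp (lt_of_lt_of_le hj (Fin.le_last _))
      obtain ⟨j', rfl⟩ := Fin.exists_succAbove_eq hjl
      rw [Fin.succAbove_last_apply] at hj ⊢
      rw [Fin.castSucc_lt_castSucc_iff] at hj
      rw [inslast_castSucc, inslast_castSucc, Fin.castSucc_lt_castSucc_iff]
      exact h _ hj
  · have : ∀ j, j < Fin.last (m + 1) → π j < π (Fin.last (m + 1)) := by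
      intro j hj
      obtain ⟨j', rfl⟩ := Fin.exists_succAbove_eq (Fin.lt_last_iff_ne_last.mp hj)
      rw [Fin.succAbove_last_apply, inslast_castSucc, ins_self]
      exact Fin.castSucc_lt_last _
    rw [if_pos this]

lemma rlm_inslast :
    rlm (ins (Fin.last (m + 1)) (Fin.last (m + 1)) τ) = rlm τ := by
  set π := ins (Fin.last (m + 1)) (Fin.last (m + 1)) τ with hπ
  have hinv : π⁻¹ 0 = (τ⁻¹ 0).castSucc := by
    have h1 : π ((τ⁻¹ 0).castSucc) = 0 := by
      rw [inslast_castSucc, Equiv.Perm.apply_inv_self, Fin.castSucc_zero]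
    rw [← h1, Equiv.Perm.inv_apply_self]
  rw [rlm_eq, rlm_eq, hinv]
  rw [card_split (Fin.last (m + 1))]
  have hlastfalse : ¬(Fin.last (m + 1) < (τ⁻¹ 0).castSucc ∧
      ∀ j, Fin.last (m + 1) < j → j < (τ⁻¹ 0).castSucc → π j < π (Fin.last (m + 1))) :=
    fun h => (Fin.le_last _).not_gt h.1
  rw [if_neg hlastfalse, add_zero]
  congr 1
  apply Finset.filter_congr
  intro i _
  rw [Fin.succAbove_last_apply]
  constructor
  · rintro ⟨h1, h2⟩
    rw [Fin.castSucc_lt_castSucc_iff] at h1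
    refine ⟨h1, fun j' hj1 hj2 => ?_⟩
    have := h2 j'.castSucc (by rwa [Fin.castSucc_lt_castSucc_iff])
      (by rwa [Fin.castSucc_lt_castSucc_iff])
    rwa [inslast_castSucc, inslast_castSucc, Fin.castSucc_lt_castSucc_iff] at this
  · rintro ⟨h1, h2⟩
    refine ⟨by rwa [Fin.castSucc_lt_castSucc_iff], fun j hj1 hj2 => ?_⟩
    have hjl : j ≠ Fin.last (m + 1) :=
      Fin.lt_last_iff_ne_last.mp (lt_of_lt_of_le hj2 (Fin.le_last _))
    obtain ⟨j', rfl⟩ := Fin.exists_succAbove_eq hjl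
    rw [Fin.succAbove_last_apply] at hj1 hj2 ⊢
    rw [Fin.castSucc_lt_castSucc_iff] at hj1 hj2
    rw [inslast_castSucc, inslast_castSucc, Fin.castSucc_lt_castSucc_iff]
    exact h2 _ hj1 hj2

lemma lrmax_ins0last :
    lrmax (ins 0 (Fin.last (m + 1)) τ) = lrmax τ := by
  set π := ins 0 (Fin.last (m + 1)) τ with hπ
  unfold lrmax
  rw [card_split (Fin.last (m + 1))]
  have hlastfalse : ¬(∀ j, j < Fin.last (m + 1) → π j < π (Fin.last (m + 1))) := by
    intro h
    have h0 : (0 : Fin (m + 2)) < Fin.last (m + 1) := by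
      rw [Fin.lt_iff_val_lt_val]; simp
    have := h 0 h0
    rw [ins_self] at this
    exact Fin.not_lt_zero _ this
  rw [if_neg hlastfalse, add_zero]
  congr 1
  apply Finset.filter_congr
  intro i _
  rw [Fin.succAbove_last_apply]
  constructor
  · intro h j' hj'
    have := h j'.castSucc (by rwa [Fin.castSucc_lt_castSucc_iff])
    rwa [ins0last_castSucc, ins0last_castSucc, Fin.succ_lt_succ_iff] at this
  · intro h j hj
    have hjl : j ≠ Fin.last (m + 1) :=
      Fin.lt_last_iff_ne_last.mp (lt_of_lt_of_le hj (Fin.le_last _))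
    obtain ⟨j', rfl⟩ := Fin.exists_succAbove_eq hjl
    rw [Fin.succAbove_last_apply] at hj ⊢
    rw [Fin.castSucc_lt_castSucc_iff] at hj
    rw [ins0last_castSucc, ins0last_castSucc, Fin.succ_lt_succ_iff]
    exact h _ hj

lemma rlm_ins0last :
    rlm (ins 0 (Fin.last (m + 1)) τ) = rlmax τ := by
  set π := ins 0 (Fin.last (m + 1)) τ with hπ
  have hinv : π⁻¹ 0 = Fin.last (m + 1) := by
    rw [← ins_self 0 (Fin.last (m + 1)) τ, hπ, Equiv.Perm.inv_apply_self]
  rw [rlm_eq, hinv]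
  unfold rlmax
  rw [card_split (Fin.last (m + 1))]
  have hlastfalse : ¬(Fin.last (m + 1) < Fin.last (m + 1) ∧
      ∀ j, Fin.last (m + 1) < j → j < Fin.last (m + 1) → π j < π (Fin.last (m + 1))) :=
    fun h => lt_irrefl _ h.1
  rw [if_neg hlastfalse, add_zero]
  congr 1
  apply Finset.filter_congr
  intro i _
  rw [Fin.succAbove_last_apply]
  constructor
  · rintro ⟨_, h2⟩ j' hj'
    have := h2 j'.castSucc (by rwa [Fin.castSucc_lt_castSucc_iff]) (Fin.castSucc_lt_last _)
    rwa [ins0last_castSucc, ins0last_castSucc, Fin.succ_lt_succ_iff] at this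
  · intro h
    refine ⟨Fin.castSucc_lt_last _, fun j hj1 hj2 => ?_⟩
    obtain ⟨j', rfl⟩ := Fin.exists_succAbove_eq (Fin.lt_last_iff_ne_last.mp hj2)
    rw [Fin.succAbove_last_apply] at hj1 ⊢
    rw [Fin.castSucc_lt_castSucc_iff] at hj1
    rw [ins0last_castSucc, ins0last_castSucc, Fin.succ_lt_succ_iff]
    exact h _ hj1

end Outer

section Ins1

lemma fin_zero_lt_one : (0 : Fin (m + 2)) < 1 := by
  rw [Fin.lt_iff_val_lt_val]; simp

lemma one_succAbove_zero : (1 : Fin (m + 2)).succAbove 0 = 0 := by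
  rw [Fin.succAbove_of_castSucc_lt]
  · rw [Fin.castSucc_zero]
  · rw [Fin.castSucc_zero]; exact fin_zero_lt_one

lemma one_succAbove_ne_zero {x : Fin (m + 1)} (hx : x ≠ 0) :
    (1 : Fin (m + 2)).succAbove x = x.succ := by
  apply Fin.succAbove_of_le_castSucc
  rw [Fin.le_iff_val_le_val]
  have : 0 < x.val := by
    rcases Nat.eq_zero_or_pos x.val with h | h
    · exact absurd (Fin.ext h) hx
    · exact h
  simp; omega

lemma one_lt_one_succAbove {x : Fin (m + 1)} (hx : x ≠ 0) :
    (1 : Fin (m + 2)) < (1 : Fin (m + 2)).succAbove x := by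
  rw [one_succAbove_ne_zero hx, Fin.lt_iff_val_lt_val, Fin.val_succ]
  have : 0 < x.val := by
    rcases Nat.eq_zero_or_pos x.val with h | h
    · exact absurd (Fin.ext h) hx
    · exact h
  simpa using this

lemma one_succAbove_eq_zero {x : Fin (m + 1)}
    (h : (1 : Fin (m + 2)).succAbove x = 0) : x = 0 := by
  by_contra hx
  rw [one_succAbove_ne_zero hx] at h
  exact Fin.succ_ne_zero _ h

lemma ins1_inv_zero (p : Fin (m + 2)) (e : Equiv.Perm (Fin (m + 1))) :
    (ins 1 p e)⁻¹ 0 = p.succAbove (e⁻¹ 0) := by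
  have h1 : ins 1 p e (p.succAbove (e⁻¹ 0)) = 0 := by
    rw [ins_succAbove, Equiv.Perm.apply_inv_self, one_succAbove_zero]
  rw [← h1, Equiv.Perm.inv_apply_self]

lemma eq_of_apply_eq_zero {k : ℕ} (π : Equiv.Perm (Fin k)) {x : Fin k} {z : Fin k}
    (h : π x = z) : x = π⁻¹ z := by
  rw [← h, Equiv.Perm.inv_apply_self]

lemma rlm_ins1 (p : Fin (m + 2)) (e : Equiv.Perm (Fin (m + 1))) :
    rlm (ins 1 p e) = rlm e + (if p = (e⁻¹ 0).castSucc then 1 else 0) := by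
  set π := ins 1 p e with hπ
  set k₀ := e⁻¹ 0 with hk₀
  rw [rlm_eq, rlm_eq, ins1_inv_zero, ← hk₀]
  rw [card_split p]
  congr 1
  · congr 1
    apply Finset.filter_congr
    intro i _
    constructor
    · rintro ⟨h1, h2⟩
      refine ⟨Fin.succAbove_lt_succAbove_iff.mp h1, fun j' hj1 hj2 => ?_⟩
      have := h2 (p.succAbove j') (Fin.succAbove_lt_succAbove_iff.mpr hj1)
        (Fin.succAbove_lt_succAbove_iff.mpr hj2)
      rw [hπ, ins_succAbove, ins_succAbove] at this
      exact Fin.succAbove_lt_succAbove_iff.mp this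
    · rintro ⟨h1, h2⟩
      refine ⟨Fin.succAbove_lt_succAbove_iff.mpr h1, fun j hj1 hj2 => ?_⟩
      rcases eq_or_ne j p with rfl | hne
      · rw [hπ, ins_self, ins_succAbove]
        apply one_lt_one_succAbove
        intro h0
        exact absurd (eq_of_apply_eq_zero e h0) (ne_of_lt h1)
      · obtain ⟨j', rfl⟩ := Fin.exists_succAbove_eq hne
        rw [hπ, ins_succAbove, ins_succAbove]
        exact Fin.succAbove_lt_succAbove_iff.mpr
          (h2 j' (Fin.succAbove_lt_succAbove_iff.mp hj1) (Fin.succAbove_lt_succAbove_iff.mp hj2))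
  · have hiff : (p < p.succAbove k₀ ∧
        ∀ j, p < j → j < p.succAbove k₀ → π j < π p) ↔ p = k₀.castSucc := by
      constructor
      · rintro ⟨h1, h2⟩
        have hKval : (p.succAbove k₀).val = p.val + 1 := by
          by_contra hKv
          have hlt : p.val + 1 < (p.succAbove k₀).val := by
            have := Fin.lt_iff_val_lt_val.mp h1
            omega
          set j : Fin (m + 2) := ⟨p.val + 1, by omega⟩ with hj
          have hπj := h2 j (by rw [Fin.lt_iff_val_lt_val]; simp [hj]) (by rwa [Fin.lt_iff_val_lt_val])
          rw [hπ, ins_self] at hπj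
          have hj0 : π j = 0 := by
            apply Fin.ext
            have := Fin.lt_iff_val_lt_val.mp hπj
            rw [Fin.val_one] at this
            simpa using Nat.lt_one_iff.mp this
          have : j = π⁻¹ 0 := eq_of_apply_eq_zero π hj0
          rw [hπ, ins1_inv_zero, ← hk₀] at this
          rw [← this] at hlt
          simp [hj] at hlt
        rcases Fin.lt_or_le k₀.castSucc p with hc | hc
        · rw [Fin.succAbove_of_castSucc_lt _ _ hc] at hKval
          have := Fin.lt_iff_val_lt_val.mp hc
          rw [Fin.coe_castSucc] at this hKval
          omega
        · rw [Fin.succAbove_of_le_castSucc _ _ hc] at hKval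
          rw [Fin.val_succ] at hKval
          apply Fin.ext
          rw [Fin.coe_castSucc]
          omega
      · rintro rfl
        have hK : k₀.castSucc.succAbove k₀ = k₀.succ :=
          Fin.succAbove_of_le_castSucc _ _ le_rfl
        rw [hK]
        refine ⟨Fin.castSucc_lt_succ, fun j hj1 hj2 => ?_⟩
        rw [Fin.lt_iff_val_lt_val] at hj1 hj2
        rw [Fin.coe_castSucc] at hj1
        rw [Fin.val_succ] at hj2
        omega
    simp only [hiff]

end Ins1

lemma lrmax_ins1 (p : Fin (m + 2)) (e : Equiv.Perm (Fin (m + 1))) :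
    lrmax (ins 1 p e) = lrmax e + (if p = (if e⁻¹ 0 = 0 then 1 else 0) then 1 else 0) := by
  set π := ins 1 p e with hπ
  by_cases hk : e⁻¹ 0 = 0
  · have he0 : e 0 = 0 := by
      have h' := Equiv.Perm.apply_inv_self e 0
      rwa [hk] at h'
    rw [if_pos hk]
    by_cases hp : p = 0
    · subst hp
      rw [if_neg (by intro h; simpa using congrArg Fin.val h), add_zero]
      unfold lrmax
      rw [card_split (0 : Fin (m + 2)), if_pos (fun j hj => absurd hj (Fin.not_lt_zero _))]
      have hpoint : ∀ i : Fin (m + 1),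
          (∀ j, j < (0 : Fin (m + 2)).succAbove i → π j < π ((0 : Fin (m + 2)).succAbove i))
            ↔ ((∀ j', j' < i → e j' < e i) ∧ i ≠ 0) := by
        intro i
        rcases eq_or_ne i 0 with rfl | hi
        · simp only [ne_eq, not_true_eq_false, and_false, iff_false]
          intro h
          have h0 : (0 : Fin (m + 2)) < (0 : Fin (m + 2)).succAbove 0 := by
            rw [Fin.zero_succAbove]
            exact Fin.succ_pos _
          have hcon := h 0 h0
          rw [hπ, ins_self, ins_succAbove, he0, one_succAbove_zero] at hcon
          exact absurd hcon (Fin.not_lt_zero _)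
        · constructor
          · intro h
            refine ⟨fun j' hj' => ?_, hi⟩
            have := h ((0 : Fin (m + 2)).succAbove j')
              (Fin.succAbove_lt_succAbove_iff.mpr hj')
            rw [hπ, ins_succAbove, ins_succAbove] at this
            exact Fin.succAbove_lt_succAbove_iff.mp this
          · rintro ⟨h, -⟩ j hj
            rcases eq_or_ne j 0 with rfl | hne
            · rw [hπ, ins_self, ins_succAbove]
              apply one_lt_one_succAbove
              intro h0
              exact hi (by rw [eq_of_apply_eq_zero e h0, hk])
            · obtain ⟨j', rfl⟩ := Fin.exists_succAbove_eq hne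
              rw [hπ, ins_succAbove, ins_succAbove]
              exact Fin.succAbove_lt_succAbove_iff.mpr
                (h j' (Fin.succAbove_lt_succAbove_iff.mp hj))
      have hfe : (univ.filter fun i : Fin (m + 1) =>
            ∀ j, j < (0 : Fin (m + 2)).succAbove i → π j < π ((0 : Fin (m + 2)).succAbove i))
          = (univ.filter fun i : Fin (m + 1) => ∀ j', j' < i → e j' < e i).erase 0 := by
        ext i
        simp only [Finset.mem_erase, Finset.mem_filter, Finset.mem_univ, true_and, hpoint i]
        tauto
      have h0mem : (0 : Fin (m + 1)) ∈ univ.filter fun i : Fin (m + 1) =>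
          ∀ j', j' < i → e j' < e i := by
        simp only [Finset.mem_filter, Finset.mem_univ, true_and]
        exact fun j hj => absurd hj (Fin.not_lt_zero _)
      have hcard : 1 ≤ (univ.filter fun i : Fin (m + 1) =>
          ∀ j', j' < i → e j' < e i).card := Finset.card_pos.mpr ⟨0, h0mem⟩
      rw [hfe, Finset.card_erase_of_mem h0mem]
      omega
    · have hsA0 : p.succAbove 0 = 0 := by
        rw [Fin.succAbove_of_castSucc_lt, Fin.castSucc_zero]
        rw [Fin.castSucc_zero]
        exact Fin.pos_iff_ne_zero.mpr hp
      unfold lrmax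
      rw [card_split p]
      congr 1
      · congr 1
        apply Finset.filter_congr
        intro i _
        constructor
        · intro h j' hj'
          have := h (p.succAbove j') (Fin.succAbove_lt_succAbove_iff.mpr hj')
          rw [hπ, ins_succAbove, ins_succAbove] at this
          exact Fin.succAbove_lt_succAbove_iff.mp this
        · intro h j hj
          rcases eq_or_ne i 0 with rfl | hi
          · rw [hsA0] at hj
            exact absurd hj (Fin.not_lt_zero _)
          · rcases eq_or_ne j p with rfl | hne
            · rw [hπ, ins_self, ins_succAbove]
              apply one_lt_one_succAbove
              intro h0
              exact hi (by rw [eq_of_apply_eq_zero e h0, hk])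
            · obtain ⟨j', rfl⟩ := Fin.exists_succAbove_eq hne
              rw [hπ, ins_succAbove, ins_succAbove]
              exact Fin.succAbove_lt_succAbove_iff.mpr
                (h j' (Fin.succAbove_lt_succAbove_iff.mp hj))
      · have hiff : (∀ j, j < p → π j < π p) ↔ p = 1 := by
          constructor
          · intro h
            by_contra hne1
            have hv0 : p.val ≠ 0 := fun hv => hp (Fin.ext hv)
            have hv1 : p.val ≠ 1 := by
              intro hv
              exact hne1 (Fin.ext (by rw [hv, Fin.val_one]))
            set j : Fin (m + 2) := ⟨1, by omega⟩ with hj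
            have hjp : j < p := by
              rw [Fin.lt_iff_val_lt_val]
              simp only [hj]
              omega
            have hπj := h j hjp
            rw [hπ, ins_self] at hπj
            have hj0 : π j = 0 := by
              apply Fin.ext
              have := Fin.lt_iff_val_lt_val.mp hπj
              rw [Fin.val_one] at this
              simpa using Nat.lt_one_iff.mp this
            have hjK : j = π⁻¹ 0 := eq_of_apply_eq_zero π hj0
            rw [hπ, ins1_inv_zero, hk, hsA0] at hjK
            simpa [hj] using congrArg Fin.val hjK
          · rintro rfl
            intro j hj
            have hj0 : j = 0 := by
              apply Fin.ext
              have := Fin.lt_iff_val_lt_val.mp hj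
              rw [Fin.val_one] at this
              simpa using Nat.lt_one_iff.mp this
            subst hj0
            have hval : π 0 = 0 := by
              have hins := ins_succAbove 1 (1 : Fin (m + 2)) e 0
              rw [he0, hsA0] at hins
              rw [hπ]
              exact hins
            rw [hval, hπ, ins_self]
            exact fin_zero_lt_one
        simp only [hiff]
  · have hkne : e⁻¹ 0 ≠ 0 := hk
    rw [if_neg hk]
    unfold lrmax
    rw [card_split p]
    congr 1
    · congr 1
      apply Finset.filter_congr
      intro i _
      constructor
      · intro h j' hj'
        have := h (p.succAbove j') (Fin.succAbove_lt_succAbove_iff.mpr hj')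
        rw [hπ, ins_succAbove, ins_succAbove] at this
        exact Fin.succAbove_lt_succAbove_iff.mp this
      · intro h j hj
        rcases eq_or_ne j p with rfl | hne
        · rw [hπ, ins_self, ins_succAbove]
          apply one_lt_one_succAbove
          intro h0
          have hik : i = e⁻¹ 0 := eq_of_apply_eq_zero e h0
          have hipos : (0 : Fin (m + 1)) < i := by
            rw [hik]
            exact Fin.pos_iff_ne_zero.mpr hkne
          have := h 0 hipos
          rw [hik] at this
          rw [Equiv.Perm.apply_inv_self] at this
          exact absurd this (Fin.not_lt_zero _)
        · obtain ⟨j', rfl⟩ := Fin.exists_succAbove_eq hne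
          rw [hπ, ins_succAbove, ins_succAbove]
          exact Fin.succAbove_lt_succAbove_iff.mpr
            (h j' (Fin.succAbove_lt_succAbove_iff.mp hj))
    · have hiff : (∀ j, j < p → π j < π p) ↔ p = 0 := by
        constructor
        · intro h
          by_contra hp0
          have h00 := h 0 (Fin.pos_iff_ne_zero.mpr hp0)
          rw [hπ, ins_self] at h00
          have h0v : π 0 = 0 := by
            apply Fin.ext
            have := Fin.lt_iff_val_lt_val.mp h00
            rw [Fin.val_one] at this
            simpa using Nat.lt_one_iff.mp this
          have h0K : (0 : Fin (m + 2)) = π⁻¹ 0 := eq_of_apply_eq_zero π h0v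
          rw [hπ, ins1_inv_zero] at h0K
          rcases Fin.lt_or_le (e⁻¹ 0).castSucc p with hc | hc
          · rw [Fin.succAbove_of_castSucc_lt _ _ hc] at h0K
            have : (e⁻¹ 0 : Fin (m + 1)) = 0 := by
              apply Fin.ext
              simpa using (congrArg Fin.val h0K).symm
            exact hkne this
          · rw [Fin.succAbove_of_le_castSucc _ _ hc] at h0K
            exact Fin.succ_ne_zero _ h0K.symm
        · rintro rfl
          intro j hj
          exact absurd hj (Fin.not_lt_zero _)
      simp only [hiff]

section Slots

def slotP (e : Equiv.Perm (Fin (m + 1))) : Fin (m + 2) := (e⁻¹ 0).castSucc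

def slotQ (e : Equiv.Perm (Fin (m + 1))) : Fin (m + 2) := if e⁻¹ 0 = 0 then 1 else 0

lemma slotP_ne_slotQ (e : Equiv.Perm (Fin (m + 1))) : slotP e ≠ slotQ e := by
  unfold slotP slotQ
  rcases eq_or_ne (e⁻¹ 0) 0 with h | h
  · rw [if_pos h, h, Fin.castSucc_zero]
    intro hc
    simpa using congrArg Fin.val hc
  · rw [if_neg h]
    intro hc
    exact h (Fin.ext (by simpa using congrArg Fin.val hc))

lemma fin_last_ne_zero : (Fin.last (m + 1)) ≠ (0 : Fin (m + 2)) := by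
  intro h; simpa using congrArg Fin.val h

def slotMap (e : Equiv.Perm (Fin (m + 1))) : Equiv.Perm (Fin (m + 2)) :=
  (Equiv.swap (slotP e) 0).trans
    (Equiv.swap ((Equiv.swap (slotP e) 0) (slotQ e)) (Fin.last (m + 1)))

lemma slotMap_P (e : Equiv.Perm (Fin (m + 1))) : slotMap e (slotP e) = 0 := by
  unfold slotMap
  rw [Equiv.trans_apply, Equiv.swap_apply_left]
  apply Equiv.swap_apply_of_ne_of_ne
  · intro h
    have h2 : (Equiv.swap (slotP e) 0) (slotP e) = (Equiv.swap (slotP e) 0) (slotQ e) := by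
      rw [Equiv.swap_apply_left]
      exact h
    exact slotP_ne_slotQ e ((Equiv.swap (slotP e) 0).injective h2)
  · exact fun h => fin_last_ne_zero h.symm

lemma slotMap_Q (e : Equiv.Perm (Fin (m + 1))) : slotMap e (slotQ e) = Fin.last (m + 1) := by
  unfold slotMap
  rw [Equiv.trans_apply, Equiv.swap_apply_left]

end Slots

section Fin1

lemma lrmax_fin1 (τ : Equiv.Perm (Fin 1)) : lrmax τ = 1 := by
  unfold lrmax
  rw [Finset.filter_true_of_mem, Finset.card_univ]
  · simp
  · intro i _ j hj
    have : j = i := Subsingleton.elim _ _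
    subst this
    exact absurd hj (lt_irrefl _)

lemma rlmax_fin1 (τ : Equiv.Perm (Fin 1)) : rlmax τ = 1 := by
  unfold rlmax
  rw [Finset.filter_true_of_mem, Finset.card_univ]
  · simp
  · intro i _ j hj
    have : j = i := Subsingleton.elim _ _
    subst this
    exact absurd hj (lt_irrefl _)

lemma rlm_fin1 (τ : Equiv.Perm (Fin 1)) : rlm τ = 0 := by
  unfold rlm
  rw [Finset.filter_false_of_mem, Finset.card_empty]
  rintro i _ ⟨k, _, hik, _⟩
  have : k = i := Subsingleton.elim _ _
  subst this
  exact absurd hik (lt_irrefl _)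

end Fin1

lemma inv_fixed {k : ℕ} (π : Equiv.Perm (Fin k)) {x : Fin k} (h : π x = x) : π⁻¹ x = x := by
  rw [← h, Equiv.Perm.inv_apply_self, h]

lemma reduced (m : ℕ) : ∃ φ : Equiv.Perm (Fin (m + 1)) → Equiv.Perm (Fin (m + 1)),
    Function.Bijective φ ∧
      ∀ τ, lrmax (φ τ) = rlm τ + 1 ∧ rlmax (φ τ) = lrmax τ := by
  induction m with
  | zero =>
    refine ⟨id, Function.bijective_id, fun τ => ?_⟩
    simp only [id_eq]
    rw [lrmax_fin1, rlm_fin1, rlmax_fin1]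
    exact ⟨rfl, rfl⟩
  | succ m IH =>
    obtain ⟨φ', hbij, hstat⟩ := IH
    refine ⟨fun τ => ins 0 (slotMap (rem 1 τ) (τ⁻¹ 1)) (φ' (rem 1 τ)), ?_, ?_⟩
    · rw [← Finite.injective_iff_bijective]
      intro τ₁ τ₂ h
      obtain ⟨hslot, hperm⟩ := ins_inj h
      have he : rem 1 τ₁ = rem 1 τ₂ := hbij.injective hperm
      rw [he] at hslot
      have hp : τ₁⁻¹ 1 = τ₂⁻¹ 1 := (slotMap (rem 1 τ₂)).injective hslot
      calc τ₁ = ins 1 (τ₁⁻¹ 1) (rem 1 τ₁) := (ins_rem 1 τ₁).symm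
        _ = ins 1 (τ₂⁻¹ 1) (rem 1 τ₂) := by rw [he, hp]
        _ = τ₂ := ins_rem 1 τ₂
    · intro τ
      obtain ⟨hs1, hs2⟩ := hstat (rem 1 τ)
      have hτ : ins 1 (τ⁻¹ 1) (rem 1 τ) = τ := ins_rem 1 τ
      constructor
      · rw [lrmax_ins0, hs1]
        conv_rhs => rw [← hτ]
        rw [rlm_ins1]
        have hiff : (slotMap (rem 1 τ) (τ⁻¹ 1) = 0) ↔ (τ⁻¹ 1 = ((rem 1 τ)⁻¹ 0).castSucc) := by
          constructor
          · intro h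
            exact (slotMap (rem 1 τ)).injective (h.trans (slotMap_P (rem 1 τ)).symm)
          · intro h
            rw [h]
            exact slotMap_P (rem 1 τ)
        simp only [hiff]
        rw [Nat.add_right_comm]
      · rw [rlmax_ins0, hs2]
        conv_rhs => rw [← hτ]
        rw [lrmax_ins1]
        have hiff : (slotMap (rem 1 τ) (τ⁻¹ 1) = Fin.last (m + 1)) ↔
            (τ⁻¹ 1 = if (rem 1 τ)⁻¹ 0 = 0 then 1 else 0) := by
          constructor
          · intro h
            exact (slotMap (rem 1 τ)).injective (h.trans (slotMap_Q (rem 1 τ)).symm)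
          · intro h
            rw [h]
            exact slotMap_Q (rem 1 τ)
        simp only [hiff]

end Stmt13Aux


open PermStats in
/-- There is a bijection `ρ` from the permutations whose last entry is the
maximum onto the permutations whose last entry is the minimum, with
`rlm π = lrmax (ρ π) - 1` and `lrmax π - 1 = rlm (ρ π)`. -/
theorem stmt13 (n : ℕ) (hn : 1 ≤ n) :
    ∃ ρ : Equiv.Perm (Fin n) → Equiv.Perm (Fin n),
      Set.BijOn ρ
        {π : Equiv.Perm (Fin n) | π ⟨n - 1, by omega⟩ = ⟨n - 1, by omega⟩}
        {π : Equiv.Perm (Fin n) | π ⟨n - 1, by omega⟩ = ⟨0, by omega⟩} ∧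
      ∀ π : Equiv.Perm (Fin n), π ⟨n - 1, by omega⟩ = ⟨n - 1, by omega⟩ →
        rlm π = lrmax (ρ π) - 1 ∧ lrmax π - 1 = rlm (ρ π) := by
  obtain ⟨k, rfl⟩ : ∃ k, n = k + 1 := ⟨n - 1, by omega⟩
  cases k with
  | zero =>
    refine ⟨id, ⟨?_, ?_, ?_⟩, ?_⟩
    · intro π _
      exact (Fin.eq_zero _).trans (Fin.eq_zero _).symm
    · intro a _ b _ h
      exact h
    · intro σ _
      exact ⟨σ, (Fin.eq_zero _).trans (Fin.eq_zero _).symm, rfl⟩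
    · intro π _
      simp only [id_eq]
      rw [Stmt13Aux.rlm_fin1, Stmt13Aux.lrmax_fin1]
      exact ⟨rfl, rfl⟩
  | succ m =>
    obtain ⟨φ, hbij, hstat⟩ := Stmt13Aux.reduced m
    have hidx0 : (⟨0, by omega⟩ : Fin (m + 1 + 1)) = (0 : Fin (m + 1 + 1)) :=
      Fin.ext (by simp)
    refine ⟨fun π => Stmt13Aux.ins 0 (Fin.last (m + 1))
      (φ (Stmt13Aux.rem (Fin.last (m + 1)) π)), ⟨?_, ?_, ?_⟩, ?_⟩
    · intro π hπ
      show Stmt13Aux.ins 0 (Fin.last (m + 1)) (φ (Stmt13Aux.rem (Fin.last (m + 1)) π))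
          ⟨m + 1 + 1 - 1, by omega⟩ = ⟨0, by omega⟩
      rw [hidx0]
      exact Stmt13Aux.ins_self _ _ _
    · intro π₁ h₁ π₂ h₂ h
      have hf₁ : π₁ (Fin.last (m + 1)) = Fin.last (m + 1) := h₁
      have hf₂ : π₂ (Fin.last (m + 1)) = Fin.last (m + 1) := h₂
      obtain ⟨-, hX⟩ := Stmt13Aux.ins_inj h
      have he := hbij.injective hX
      have r₁ : Stmt13Aux.ins (Fin.last (m + 1)) (Fin.last (m + 1))
          (Stmt13Aux.rem (Fin.last (m + 1)) π₁) = π₁ := by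
        have h1 := Stmt13Aux.ins_rem (Fin.last (m + 1)) π₁
        rwa [Stmt13Aux.inv_fixed π₁ hf₁] at h1
      have r₂ : Stmt13Aux.ins (Fin.last (m + 1)) (Fin.last (m + 1))
          (Stmt13Aux.rem (Fin.last (m + 1)) π₂) = π₂ := by
        have h1 := Stmt13Aux.ins_rem (Fin.last (m + 1)) π₂
        rwa [Stmt13Aux.inv_fixed π₂ hf₂] at h1
      calc π₁ = Stmt13Aux.ins (Fin.last (m + 1)) (Fin.last (m + 1))
            (Stmt13Aux.rem (Fin.last (m + 1)) π₁) := r₁.symm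
        _ = Stmt13Aux.ins (Fin.last (m + 1)) (Fin.last (m + 1))
            (Stmt13Aux.rem (Fin.last (m + 1)) π₂) := by rw [he]
        _ = π₂ := r₂
    · intro σ hσ
      have hfσ : σ (Fin.last (m + 1)) = 0 := by
        rw [← hidx0]
        exact hσ
      have hinv : σ⁻¹ 0 = Fin.last (m + 1) := by
        rw [← hfσ, Equiv.Perm.inv_apply_self]
      have rσ : Stmt13Aux.ins 0 (Fin.last (m + 1)) (Stmt13Aux.rem 0 σ) = σ := by
        have h1 := Stmt13Aux.ins_rem 0 σ
        rwa [hinv] at h1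
      obtain ⟨τ, hτ⟩ := hbij.surjective (Stmt13Aux.rem 0 σ)
      refine ⟨Stmt13Aux.ins (Fin.last (m + 1)) (Fin.last (m + 1)) τ, ?_, ?_⟩
      · show Stmt13Aux.ins (Fin.last (m + 1)) (Fin.last (m + 1)) τ
            ⟨m + 1 + 1 - 1, by omega⟩ = ⟨m + 1 + 1 - 1, by omega⟩
        exact Stmt13Aux.ins_self _ _ _
      · show Stmt13Aux.ins 0 (Fin.last (m + 1)) (φ (Stmt13Aux.rem (Fin.last (m + 1))
            (Stmt13Aux.ins (Fin.last (m + 1)) (Fin.last (m + 1)) τ))) = σ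
        rw [Stmt13Aux.rem_ins, hτ, rσ]
    · intro π hπ
      dsimp only
      have hf : π (Fin.last (m + 1)) = Fin.last (m + 1) := hπ
      have r : Stmt13Aux.ins (Fin.last (m + 1)) (Fin.last (m + 1))
          (Stmt13Aux.rem (Fin.last (m + 1)) π) = π := by
        have h1 := Stmt13Aux.ins_rem (Fin.last (m + 1)) π
        rwa [Stmt13Aux.inv_fixed π hf] at h1
      obtain ⟨hs1, hs2⟩ := hstat (Stmt13Aux.rem (Fin.last (m + 1)) π)
      have e1 : rlm π = rlm (Stmt13Aux.rem (Fin.last (m + 1)) π) := by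
        conv_lhs => rw [← r]
        rw [Stmt13Aux.rlm_inslast]
      have e2 : lrmax π = lrmax (Stmt13Aux.rem (Fin.last (m + 1)) π) + 1 := by
        conv_lhs => rw [← r]
        rw [Stmt13Aux.lrmax_inslast]
      have e3 : lrmax (Stmt13Aux.ins 0 (Fin.last (m + 1))
          (φ (Stmt13Aux.rem (Fin.last (m + 1)) π)))
          = rlm (Stmt13Aux.rem (Fin.last (m + 1)) π) + 1 := by
        rw [Stmt13Aux.lrmax_ins0last, hs1]
      have e4 : rlm (Stmt13Aux.ins 0 (Fin.last (m + 1))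
          (φ (Stmt13Aux.rem (Fin.last (m + 1)) π)))
          = lrmax (Stmt13Aux.rem (Fin.last (m + 1)) π) := by
        rw [Stmt13Aux.rlm_ins0last, hs2]
      omega
end

section
/- For every n ≥ 1 there exists an involution γ on the set I_n of inversion sequences of length n such that for every e ∈ I_n: (dist(e), zero(e), max(e), rlmin(e)) = (dist(γ(e)), zero(γ(e)), rlmin(γ(e)), max(γ(e))). In particular, the statistics (dist, zero, max, rlmin) and (dist, zero, rlmin, max) are equidistributed over I_n. -/
open Finset

namespace InvSeqStats

open Finset

variable {n : ℕ}

/-- `zero s`: the number of entries of `s` equal to `0`. -/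
def zero (s : Fin n → ℕ) : ℕ := (univ.filter (fun i : Fin n => s i = 0)).card

/-- `maxStat s`: the number of entries with the maximal possible value, i.e.
`s i = i` (zero-indexed; this is `s_i = i - 1` in one-indexed notation). -/
def maxStat (s : Fin n → ℕ) : ℕ := (univ.filter (fun i : Fin n => s i = (i : ℕ))).card

/-- `dist s`: the number of positions `i ≥ 2` (one-indexed) with `s i ≠ 0` and
`s i ≠ s j` for all `j > i`. -/
def dist (s : Fin n → ℕ) : ℕ :=
  (univ.filter (fun i : Fin n => 1 ≤ (i : ℕ) ∧ s i ≠ 0 ∧ ∀ j, i < j → s j ≠ s i)).card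

/-- `rlmin s`: the number of strict right-to-left minima of the word `s`. -/
def rlmin (s : Fin n → ℕ) : ℕ :=
  (univ.filter (fun i : Fin n => ∀ j, i < j → s i < s j)).card

end InvSeqStats

namespace Stmt14Aux

open Finset

variable {n : ℕ}


variable {n : ℕ}

/-- The Lehmer code of a permutation: `code p i = #{j < i : p j > p i}`. -/
def code (p : Equiv.Perm (Fin n)) (i : Fin n) : ℕ :=
  (univ.filter (fun j : Fin n => j < i ∧ p i < p j)).card

lemma code_le (p : Equiv.Perm (Fin n)) (i : Fin n) : code p i ≤ (i : ℕ) := by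
  classical
  have h : (univ.filter (fun j : Fin n => j < i ∧ p i < p j)) ⊆ Finset.Iio i := by
    intro j hj
    simp only [mem_filter, mem_Iio] at hj ⊢
    exact hj.2.1
  simpa [code, Fin.card_Iio] using Finset.card_le_card h

/-- The involution `p ↦ rev ∘ p⁻¹ ∘ rev`. -/
def irc (p : Equiv.Perm (Fin n)) : Equiv.Perm (Fin n) :=
  (Fin.revPerm.trans p.symm).trans Fin.revPerm

lemma irc_apply (p : Equiv.Perm (Fin n)) (i : Fin n) :
    irc p i = Fin.rev (p.symm (Fin.rev i)) := rfl

lemma irc_irc (p : Equiv.Perm (Fin n)) : irc (irc p) = p := by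
  ext i
  simp [irc, Equiv.trans_apply, Equiv.symm_trans_apply, Fin.rev_rev]

/-- Key reindexing identity: the code of `irc p` is the code of `p` permuted. -/
lemma code_irc (p : Equiv.Perm (Fin n)) (i : Fin n) :
    code (irc p) (Fin.rev (p i)) = code p i := by
  classical
  unfold code
  refine Finset.card_nbij' (fun j => p.symm (Fin.rev j)) (fun k => Fin.rev (p k)) ?_ ?_ ?_ ?_
  · intro j hj
    simp only [mem_coe, mem_filter, mem_univ, true_and, irc_apply, Fin.rev_rev,
      Equiv.symm_apply_apply] at hj ⊢
    obtain ⟨h1, h2⟩ := hj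
    constructor
    · -- p.symm (rev j) < i  from  rev i < rev (p.symm (rev j))
      exact Fin.rev_lt_rev.mp h2
    · -- p i < p (p.symm (rev j)) = rev j  from  j < rev (p i)
      rw [Equiv.apply_symm_apply]
      exact Fin.lt_rev_iff.mp h1
  · intro k hk
    simp only [mem_coe, mem_filter, mem_univ, true_and, irc_apply, Fin.rev_rev,
      Equiv.symm_apply_apply] at hk ⊢
    obtain ⟨h1, h2⟩ := hk
    constructor
    · exact Fin.lt_rev_iff.mpr (by simpa using h2)
    · exact Fin.rev_lt_rev.mpr h1
  · intro j _; simp [Fin.rev_rev]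
  · intro k _; simp [Fin.rev_rev]




lemma code_eq_self_iff (p : Equiv.Perm (Fin n)) (i : Fin n) :
    code p i = (i : ℕ) ↔ ∀ j, j < i → p i < p j := by
  classical
  constructor
  · intro h j hj
    have hsub : (univ.filter (fun j : Fin n => j < i ∧ p i < p j)) ⊆ Finset.Iio i := by
      intro k hk; simp only [mem_filter, mem_Iio] at hk ⊢; exact hk.2.1
    have hcard : (Finset.Iio i).card ≤ (univ.filter (fun j : Fin n => j < i ∧ p i < p j)).card := by
      rw [Fin.card_Iio]; exact h.ge
    have := Finset.eq_of_subset_of_card_le hsub hcard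
    have hjm : j ∈ (univ.filter (fun j : Fin n => j < i ∧ p i < p j)) := by
      rw [this]; simpa using hj
    simp only [mem_filter] at hjm
    exact hjm.2.2
  · intro h
    have : (univ.filter (fun j : Fin n => j < i ∧ p i < p j)) = Finset.Iio i := by
      ext j
      simp only [mem_filter, mem_univ, true_and, mem_Iio]
      exact ⟨fun hj => hj.1, fun hj => ⟨hj, h j hj⟩⟩
    rw [code, this, Fin.card_Iio]

-- Lemma D
lemma lrmin_iff_forall (p : Equiv.Perm (Fin n)) (i : Fin n) :
    (∀ k, p k < p i → code p i < code p k) ↔ ∀ j, j < i → p i < p j := by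
  classical
  constructor
  · intro H
    by_contra hcon
    push_neg at hcon
    obtain ⟨j₀, hj₀lt, hj₀⟩ := hcon
    have hj₀' : p j₀ < p i := by
      rcases lt_or_eq_of_le hj₀ with h | h
      · exact h
      · exact absurd (p.injective h) (ne_of_lt hj₀lt)
    set S : Finset (Fin n) := univ.filter (fun j => j < i ∧ p j < p i) with hS
    have hne : S.Nonempty := ⟨j₀, by simp [hS, hj₀lt, hj₀']⟩
    obtain ⟨k, hkS, hkmax⟩ := Finset.exists_max_image S p hne
    simp only [hS, mem_filter, mem_univ, true_and] at hkS
    have hlt : code p i < code p k := H k hkS.2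
    have hle : code p k ≤ code p i := by
      apply Finset.card_le_card
      intro m hm
      simp only [mem_filter, mem_univ, true_and] at hm ⊢
      obtain ⟨hm1, hm2⟩ := hm
      have hmi : m < i := lt_trans hm1 hkS.1
      refine ⟨hmi, ?_⟩
      rcases lt_trichotomy (p i) (p m) with h | h | h
      · exact h
      · exact absurd (p.injective h.symm) (ne_of_lt hmi)
      · exact absurd (hkmax m (by simp [hS, hmi, h])) (not_le.mpr hm2)
    omega
  · intro H k hk
    have hki : i < k := by
      rcases lt_trichotomy k i with h | h | h
      · exact absurd (H k h) (not_lt.mpr (le_of_lt hk))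
      · exact absurd (congrArg p h) (ne_of_lt hk)
      · exact h
    apply Finset.card_lt_card
    rw [Finset.ssubset_iff_of_subset]
    · exact ⟨i, by simp [hki, hk], by simp⟩
    · intro m hm
      simp only [mem_filter, mem_univ, true_and] at hm ⊢
      exact ⟨lt_trans hm.1 hki, lt_trans hk hm.2⟩

-- Lemma A: `code p i = n - 1 - p i` iff `i` is a right-to-left maximum position.
lemma code_eq_rev_iff (p : Equiv.Perm (Fin n)) (i : Fin n) :
    code p i = ((p i).rev : ℕ) ↔ ∀ j, i < j → p j < p i := by
  classical
  have hGcard : (univ.filter (fun j : Fin n => p i < p j)).card = ((p i).rev : ℕ) := by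
    have : (univ.filter (fun j : Fin n => p i < p j)).card = (Finset.Ioi (p i)).card := by
      refine Finset.card_nbij (fun j => p j) ?_ ?_ ?_
      · intro j hj; simp only [mem_coe, mem_filter, mem_univ, true_and] at hj; simpa using hj
      · intro a _ b _ hab; exact p.injective hab
      · intro v hv
        simp only [Finset.coe_filter, Set.mem_image, Set.mem_setOf_eq, mem_coe, mem_Ioi,
          mem_univ, true_and] at hv ⊢
        exact ⟨p.symm v, by simpa using hv, by simp⟩
    rw [this, Fin.card_Ioi, Fin.val_rev]
    omega
  have hsub : (univ.filter (fun j : Fin n => j < i ∧ p i < p j)) ⊆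
      (univ.filter (fun j : Fin n => p i < p j)) := by
    intro j hj; simp only [mem_filter] at hj ⊢; exact ⟨hj.1, hj.2.2⟩
  constructor
  · intro h j hij
    have heq := Finset.eq_of_subset_of_card_le hsub (by rw [hGcard, ← h, code])
    rcases lt_trichotomy (p j) (p i) with hlt | he | hgt
    · exact hlt
    · exact absurd (p.injective he) (ne_of_gt hij)
    · have : j ∈ (univ.filter (fun j : Fin n => j < i ∧ p i < p j)) := by
        rw [heq]; simp [hgt]
      simp only [mem_filter] at this
      exact absurd this.2.1 (not_lt.mpr (le_of_lt hij))
  · intro H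
    have : (univ.filter (fun j : Fin n => j < i ∧ p i < p j)) =
        (univ.filter (fun j : Fin n => p i < p j)) := by
      ext j
      simp only [mem_filter, mem_univ, true_and]
      refine ⟨fun hj => hj.2, fun hj => ⟨?_, hj⟩⟩
      rcases lt_trichotomy j i with h | h | h
      · exact h
      · exact absurd (congrArg p h) (ne_of_gt hj)
      · exact absurd (H j h) (not_lt.mpr (le_of_lt hj))
    rw [code, this, hGcard]

-- Lemma B
lemma rlmax_iff_forall (p : Equiv.Perm (Fin n)) (i : Fin n) :
    (∀ j, i < j → code p i < code p j) ↔ ∀ j, i < j → p j < p i := by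
  classical
  constructor
  · intro H
    by_contra hcon
    push_neg at hcon
    obtain ⟨j₀, hj₀lt, hj₀⟩ := hcon
    have hj₀' : p i < p j₀ := by
      rcases lt_or_eq_of_le hj₀ with h | h
      · exact h
      · exact absurd (p.injective h) hj₀lt.ne
    set S : Finset (Fin n) := univ.filter (fun j => i < j ∧ p i < p j) with hS
    have hne : S.Nonempty := ⟨j₀, by simp [hS, hj₀lt, hj₀']⟩
    set k := S.min' hne with hk
    have hkS : i < k ∧ p i < p k := by
      have h := S.min'_mem hne
      simp only [hS, mem_filter, mem_univ, true_and] at h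
      exact h
    have hlt : code p i < code p k := H k hkS.1
    have hle : code p k ≤ code p i := by
      apply Finset.card_le_card
      intro m hm
      simp only [mem_filter, mem_univ, true_and] at hm ⊢
      obtain ⟨hm1, hm2⟩ := hm
      have hpm : p i < p m := lt_trans hkS.2 hm2
      rcases lt_trichotomy m i with h | h | h
      · exact ⟨h, hpm⟩
      · exact absurd (congrArg p h) (ne_of_gt hpm)
      · have : m ∈ S := by simp [hS, h, hpm]
        exact absurd (S.min'_le m this) (not_le.mpr hm1)
    omega
  · intro H j hij
    apply Finset.card_lt_card
    rw [Finset.ssubset_iff_of_subset]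
    · exact ⟨i, by simp [hij, H j hij], by simp⟩
    · intro m hm
      simp only [mem_filter, mem_univ, true_and] at hm ⊢
      exact ⟨lt_trans hm.1 hij, lt_trans (H j hij) hm.2⟩




lemma card_filter_reindex (p : Equiv.Perm (Fin n)) (A : Fin n → Prop) [DecidablePred A] :
    (univ.filter A).card = (univ.filter (fun i => A (Fin.rev (p i)))).card := by
  classical
  refine Finset.card_nbij' (fun j => p.symm (Fin.rev j)) (fun i => Fin.rev (p i)) ?_ ?_ ?_ ?_
  · intro j hj
    simp only [mem_coe, mem_filter, mem_univ, true_and, Equiv.apply_symm_apply, Fin.rev_rev] at hj ⊢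
    exact hj
  · intro i hi
    simp only [mem_coe, mem_filter, mem_univ, true_and] at hi ⊢
    exact hi
  · intro j _; simp [Fin.rev_rev]
  · intro i _; simp [Fin.rev_rev]

lemma zero_transfer (p : Equiv.Perm (Fin n)) :
    InvSeqStats.zero (code p) = InvSeqStats.zero (code (irc p)) := by
  classical
  unfold InvSeqStats.zero
  rw [card_filter_reindex p (fun j => code (irc p) j = 0)]
  congr 1
  apply Finset.filter_congr
  intro i _
  rw [code_irc]

lemma max_transfer (p : Equiv.Perm (Fin n)) :
    InvSeqStats.maxStat (code p) = InvSeqStats.rlmin (code (irc p)) := by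
  classical
  unfold InvSeqStats.maxStat InvSeqStats.rlmin
  rw [card_filter_reindex p (fun j => ∀ j', j < j' → code (irc p) j < code (irc p) j')]
  congr 1
  apply Finset.filter_congr
  intro i _
  rw [code_eq_self_iff, ← lrmin_iff_forall]
  constructor
  · intro H j' hj'
    have hk : Fin.rev (p (p.symm (Fin.rev j'))) = j' := by simp [Fin.rev_rev]
    set k := p.symm (Fin.rev j') with hkdef
    have hpk : p k < p i := by
      rw [← hk] at hj'; exact Fin.rev_lt_rev.mp hj'
    calc code (irc p) (Fin.rev (p i)) = code p i := code_irc p i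
      _ < code p k := H k hpk
      _ = code (irc p) (Fin.rev (p k)) := (code_irc p k).symm
      _ = code (irc p) j' := by rw [hk]
  · intro H k hpk
    have h := H (Fin.rev (p k)) (Fin.rev_lt_rev.mpr hpk)
    rwa [code_irc, code_irc] at h

lemma rlmin_transfer (p : Equiv.Perm (Fin n)) :
    InvSeqStats.rlmin (code p) = InvSeqStats.maxStat (code (irc p)) := by
  classical
  unfold InvSeqStats.maxStat InvSeqStats.rlmin
  rw [card_filter_reindex p (fun j => code (irc p) j = (j : ℕ))]
  congr 1
  apply Finset.filter_congr
  intro i _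
  rw [code_irc, rlmax_iff_forall, ← code_eq_rev_iff]

/-- `dist` counts the distinct nonzero values. -/
lemma dist_eq_card_image (s : Fin n → ℕ) (hs : ∀ i, s i ≤ (i : ℕ)) :
    InvSeqStats.dist s = ((univ.image s).erase 0).card := by
  classical
  unfold InvSeqStats.dist
  refine Finset.card_nbij s ?_ ?_ ?_
  · intro i hi
    simp only [mem_coe, mem_filter, mem_univ, true_and] at hi
    exact Finset.mem_erase.mpr ⟨hi.2.1, Finset.mem_image_of_mem s (mem_univ i)⟩
  · intro a ha b hb hab
    simp only [coe_filter, Set.mem_setOf_eq, mem_univ, true_and] at ha hb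
    by_contra hne
    rcases lt_or_gt_of_ne hne with h | h
    · exact ha.2.2 b h hab.symm
    · exact hb.2.2 a h hab
  · intro v hv
    simp only [coe_erase, Set.mem_diff, mem_coe, Set.mem_singleton_iff] at hv
    obtain ⟨hvim, hv0⟩ := hv
    obtain ⟨i₀, _, hi₀⟩ := Finset.mem_image.mp hvim
    set T : Finset (Fin n) := univ.filter (fun i => s i = v) with hT
    have hne : T.Nonempty := ⟨i₀, by simp [hT, hi₀]⟩
    set m := T.max' hne with hm
    have hmT : s m = v := by
      have h := T.max'_mem hne
      simp only [hT, mem_filter, mem_univ, true_and] at h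
      exact h
    refine (Set.mem_image _ _ _).mpr ⟨m, ?_, hmT⟩
    simp only [coe_filter, Set.mem_setOf_eq, mem_univ, true_and]
    refine ⟨?_, by rw [hmT]; exact hv0, ?_⟩
    · have h0 := hs m
      by_contra hc
      push_neg at hc
      apply hv0
      rw [← hmT]
      omega
    · intro j hj hjs
      have : j ∈ T := by simp [hT, hjs, hmT]
      exact absurd (T.le_max' j this) (not_le.mpr hj)
  



lemma code_injective : Function.Injective (code : Equiv.Perm (Fin n) → Fin n → ℕ) := by
  classical
  intro p p' h
  have key : ∀ i : Fin n, (∀ j, i < j → p j = p' j) → p i = p' i := by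
    intro i hsuf
    set B : Finset (Fin n) := (univ.filter (fun j => i < j)).image p with hB
    have hB' : B = (univ.filter (fun j => i < j)).image p' := by
      ext u
      simp only [hB, mem_image, mem_filter, mem_univ, true_and]
      constructor
      · rintro ⟨j, hj, rfl⟩; exact ⟨j, hj, (hsuf j hj).symm⟩
      · rintro ⟨j, hj, rfl⟩; exact ⟨j, hj, hsuf j hj⟩
    set g : Fin n → ℕ := fun v => (univ.filter (fun u => v < u ∧ u ∉ B)).card with hg
    have hcode : ∀ (q : Equiv.Perm (Fin n)), (∀ j, i < j → q j = p j) → code q i = g (q i) := by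
      intro q hq
      have hBq : B = (univ.filter (fun j => i < j)).image q := by
        ext u
        simp only [hB, mem_image, mem_filter, mem_univ, true_and]
        constructor
        · rintro ⟨j, hj, rfl⟩; exact ⟨j, hj, hq j hj⟩
        · rintro ⟨j, hj, rfl⟩; exact ⟨j, hj, (hq j hj).symm⟩
      rw [code, hg]
      refine Finset.card_nbij q ?_ ?_ ?_
      · intro j hj
        simp only [mem_coe, mem_filter, mem_univ, true_and] at hj ⊢
        refine ⟨hj.2, ?_⟩
        rw [hBq]
        simp only [mem_image, mem_filter, mem_univ, true_and, not_exists]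
        rintro k ⟨hk, hkj⟩
        exact absurd (q.injective hkj ▸ hk) (not_lt.mpr (le_of_lt hj.1))
      · intro a _ b _ hab; exact q.injective hab
      · intro u hu
        simp only [coe_filter, Set.mem_setOf_eq, mem_univ, true_and] at hu
        refine (Set.mem_image _ _ _).mpr ⟨q.symm u, ?_, by simp⟩
        simp only [coe_filter, Set.mem_setOf_eq, mem_univ, true_and]
        have hne : q.symm u ≠ i := by
          intro hc
          have hui : u = q i := by rw [← hc, q.apply_symm_apply]
          rw [hui] at hu
          exact lt_irrefl _ hu.1
        rcases lt_trichotomy (q.symm u) i with hlt | he | hgt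
        · refine ⟨hlt, by simpa using hu.1⟩
        · exact absurd he hne
        · exfalso
          apply hu.2
          rw [hBq]
          exact Finset.mem_image.mpr ⟨q.symm u, by simpa using hgt, by simp⟩
    have h1 : code p i = g (p i) := hcode p (fun _ _ => rfl)
    have h2 : code p' i = g (p' i) := hcode p' (fun j hj => (hsuf j hj).symm)
    have hpB : p i ∉ B := by
      simp only [hB, mem_image, mem_filter, mem_univ, true_and, not_exists]
      rintro k ⟨hk, hkj⟩
      exact absurd (p.injective hkj ▸ hk) (lt_irrefl i)
    have hp'B : p' i ∉ B := by
      rw [hB']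
      simp only [mem_image, mem_filter, mem_univ, true_and, not_exists]
      rintro k ⟨hk, hkj⟩
      exact absurd (p'.injective hkj ▸ hk) (lt_irrefl i)
    have hmono : ∀ v w : Fin n, v < w → w ∉ B → g w < g v := by
      intro v w hvw hwB
      apply Finset.card_lt_card
      rw [Finset.ssubset_iff_of_subset]
      · refine ⟨w, by simp [hvw, hwB], by simp⟩
      · intro u hu
        simp only [mem_filter, mem_univ, true_and] at hu ⊢
        exact ⟨lt_trans hvw hu.1, hu.2⟩
    have heq : g (p i) = g (p' i) := by
      rw [← h1, ← h2, congrFun h i]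
    rcases lt_trichotomy (p i) (p' i) with hlt | he | hgt
    · exact absurd heq (ne_of_gt (hmono _ _ hlt hp'B))
    · exact he
    · exact absurd heq (ne_of_lt (hmono _ _ hgt hpB))
  have all : ∀ k : ℕ, ∀ i : Fin n, n - (i : ℕ) ≤ k → p i = p' i := by
    intro k
    induction k with
    | zero => intro i hi; exact absurd hi (by have := i.2; omega)
    | succ k ih =>
      intro i _
      apply key
      intro j hj
      apply ih
      have h1 : (i : ℕ) < (j : ℕ) := hj
      have := j.2
      omega
  exact Equiv.ext (fun i => all n i (by omega))




def seqEquiv : {s : Fin n → ℕ // ∀ i, s i ≤ (i : ℕ)} ≃ (∀ i : Fin n, Fin ((i : ℕ) + 1)) where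
  toFun s := fun i => ⟨s.1 i, Nat.lt_succ_of_le (s.2 i)⟩
  invFun f := ⟨fun i => (f i : ℕ), fun i => Nat.le_of_lt_succ (f i).2⟩
  left_inv s := by ext i; rfl
  right_inv f := by ext i; rfl

noncomputable instance : Fintype {s : Fin n → ℕ // ∀ i, s i ≤ (i : ℕ)} :=
  Fintype.ofEquiv _ seqEquiv.symm

lemma card_seq : Fintype.card {s : Fin n → ℕ // ∀ i, s i ≤ (i : ℕ)} =
    Fintype.card (Equiv.Perm (Fin n)) := by
  rw [Fintype.card_congr (seqEquiv (n := n)), Fintype.card_perm, Fintype.card_fin,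
    Fintype.card_pi]
  simp only [Fintype.card_fin]
  rw [Fin.prod_univ_eq_prod_range (fun i => i + 1) n]
  exact Finset.prod_range_add_one_eq_factorial n

noncomputable def codeEquiv : Equiv.Perm (Fin n) ≃ {s : Fin n → ℕ // ∀ i, s i ≤ (i : ℕ)} :=
  Equiv.ofBijective (fun p => ⟨code p, code_le p⟩)
    ((Fintype.bijective_iff_injective_and_card _).mpr
      ⟨fun a b hab => code_injective (congrArg Subtype.val hab), card_seq.symm⟩)

lemma codeEquiv_coe (p : Equiv.Perm (Fin n)) : ((codeEquiv p : {s : Fin n → ℕ // ∀ i, s i ≤ (i : ℕ)}) : Fin n → ℕ) = code p := rfl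


/-- Transfer of the value set. -/
lemma image_code_irc (p : Equiv.Perm (Fin n)) :
    univ.image (code (irc p)) = univ.image (code p) := by
  ext v
  simp only [mem_image, mem_univ, true_and]
  constructor
  · rintro ⟨j, rfl⟩
    refine ⟨p.symm (Fin.rev j), ?_⟩
    have h := code_irc p (p.symm (Fin.rev j))
    rw [Equiv.apply_symm_apply, Fin.rev_rev] at h
    exact h.symm
  · rintro ⟨i, rfl⟩
    exact ⟨Fin.rev (p i), code_irc p i⟩

lemma dist_transfer (p : Equiv.Perm (Fin n)) :
    InvSeqStats.dist (code p) = InvSeqStats.dist (code (irc p)) := by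
  rw [dist_eq_card_image _ (code_le p), dist_eq_card_image _ (code_le (irc p)), image_code_irc]

end Stmt14Aux

open InvSeqStats in
/-- There is an involution `γ` on the set of inversion sequences of length `n`
with `(dist, zero, max, rlmin) e = (dist, zero, rlmin, max) (γ e)`. -/
theorem stmt14 (n : ℕ) (hn : 1 ≤ n) :
    ∃ γ : {s : Fin n → ℕ // ∀ i, s i ≤ (i : ℕ)} → {s : Fin n → ℕ // ∀ i, s i ≤ (i : ℕ)},
      (∀ e, γ (γ e) = e) ∧
      ∀ e : {s : Fin n → ℕ // ∀ i, s i ≤ (i : ℕ)},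
        InvSeqStats.dist (e : Fin n → ℕ) = InvSeqStats.dist ((γ e : Fin n → ℕ)) ∧
        zero (e : Fin n → ℕ) = zero ((γ e : Fin n → ℕ)) ∧
        maxStat (e : Fin n → ℕ) = InvSeqStats.rlmin ((γ e : Fin n → ℕ)) ∧
        InvSeqStats.rlmin (e : Fin n → ℕ) = maxStat ((γ e : Fin n → ℕ)) := by
  
  classical
  refine ⟨fun s => Stmt14Aux.codeEquiv (Stmt14Aux.irc (Stmt14Aux.codeEquiv.symm s)), ?_, ?_⟩
  · intro e
    simp only [Equiv.symm_apply_apply, Stmt14Aux.irc_irc, Equiv.apply_symm_apply]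
  · intro e
    obtain ⟨p, rfl⟩ := Stmt14Aux.codeEquiv.surjective e
    simp only [Equiv.symm_apply_apply, Stmt14Aux.codeEquiv_coe]
    exact ⟨Stmt14Aux.dist_transfer p, Stmt14Aux.zero_transfer p,
      Stmt14Aux.max_transfer p, Stmt14Aux.rlmin_transfer p⟩
end
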